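/- arXiv:2202.05138 — 3 statements merged into one kernel-verified Lean document; each statement's English description precedes it below -/
import Mathlib

section
/- Assume Λ = Λ₁ ⊔ Λ₂ is a disjoint union such that ⟨H_α, H_β⟩ = 0 for all α ∈ Λ₁ and β ∈ Λ₂, and such that every root in Σ lies in span Λ₁ or in span Λ₂. Then 𝔞_{Λ₁} = 𝔞^{Λ₂} and 𝔫_{Λ₁} = 𝔫^{Λ₂}. Consequently, for every subspace 𝔥 of 𝔤 one has 𝔥 + 𝔞_{Λ₁} + 𝔫_{Λ₁} = 𝔥 + 𝔞^{Λ₂} + 𝔫^{Λ₂}. (This is the Lie-algebraic content of Lemma 5.1 of the paper: the canonical extension of an action on the factor B_{Λ₁} of a product has the same orbits as the corresponding product action.) -/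
/-!
Work inside `𝔞` with the form `⟨X, Y⟩ = -B(X, θY)`, which is symmetric and anisotropic, and for
which `H_λ` represents `λ`. Then `𝔞_Φ` is the orthogonal complement of `span {H_α | α ∈ Φ}`.
Since the `H_α` (`α ∈ Λ`) span `𝔞` and `H_{Λ₁} ⊥ H_{Λ₂}`, the spans of `H_{Λ₁}` and `H_{Λ₂}` are
each other's orthogonal complements, so `𝔞_{Λ₁}` and `𝔞^{Λ₂} = 𝔞_{Λ₂}^⊥` both equal
`span H_{Λ₂}`. The same orthogonality gives `span Λ₁ ∩ span Λ₂ = 0`, so a positive root lies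
outside `span Λ₁` exactly when it lies in `span Λ₂`, whence `𝔫_{Λ₁} = 𝔫^{Λ₂}`.
-/

open Module Submodule

namespace LinearMap.BilinForm

variable {R M : Type*} [CommRing R] [AddCommGroup M] [Module R M] {B : LinearMap.BilinForm R M}
  {P Q : Submodule R M}

theorem injective_of_anisotropic (hB : ∀ x, B x x = 0 → x = 0) : Function.Injective B :=
  (injective_iff_map_eq_zero B).mpr fun x hx => hB x (by rw [hx]; rfl)

theorem disjoint_of_le_orthogonal (hB : ∀ x, B x x = 0 → x = 0) (hPQ : P ≤ B.orthogonal Q) :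
    Disjoint P Q :=
  disjoint_def.mpr fun x hxP hxQ => hB x (hPQ hxP x hxQ)

theorem le_orthogonal_comm (hB₀ : B.IsRefl) (hPQ : P ≤ B.orthogonal Q) : Q ≤ B.orthogonal P :=
  fun _ hq _ hp => hB₀ _ _ (hPQ hp _ hq)

theorem orthogonal_eq_of_le_orthogonal_of_sup_eq_top (hB₀ : B.IsRefl)
    (hB : ∀ x, B x x = 0 → x = 0) (hPQ : P ≤ B.orthogonal Q) (hsup : P ⊔ Q = ⊤) :
    B.orthogonal P = Q := by
  refine le_antisymm (fun x hx => ?_) (le_orthogonal_comm hB₀ hPQ)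
  obtain ⟨p, hp, q, hq, rfl⟩ := mem_sup.mp (hsup ▸ mem_top : x ∈ P ⊔ Q)
  have hp0 : p = 0 := hB p <| by
    have hpq : B p q = 0 := le_orthogonal_comm hB₀ hPQ hq p hp
    simpa [hpq] using hx p hp
  simpa [hp0] using hq

theorem mem_orthogonal_span_iff {t : Set M} {x : M} :
    x ∈ B.orthogonal (span R t) ↔ ∀ y ∈ t, B y x = 0 := by
  change (∀ y ∈ span R t, y ∈ ker (B.flip x)) ↔ _
  exact span_le

section RootVectors

variable {H : Dual R M → M} {s t : Set (Dual R M)}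

theorem span_image_le_orthogonal_span_image (hB₀ : B.IsRefl)
    (horth : ∀ α ∈ s, ∀ β ∈ t, B (H α) (H β) = 0) :
    span R (H '' s) ≤ B.orthogonal (span R (H '' t)) :=
  span_le.mpr <| Set.forall_mem_image.mpr fun α hα => mem_orthogonal_span_iff.mpr <|
    Set.forall_mem_image.mpr fun β hβ => hB₀ _ _ (horth α hα β hβ)

theorem map_span_image_eq_span (hH : Function.LeftInverse B H) (s : Set (Dual R M)) :
    (span R (H '' s)).map B = span R s := by
  rw [map_span, Set.image_image, Set.image_congr fun α _ => hH α, Set.image_id']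

theorem mem_orthogonal_span_image_iff (hH : Function.LeftInverse B H) {x : M} :
    x ∈ B.orthogonal (span R (H '' s)) ↔ ∀ α ∈ s, α x = 0 := by
  simp only [mem_orthogonal_span_iff, Set.forall_mem_image, hH _]

theorem span_image_eq_top (hH : Function.LeftInverse B H) (hB : ∀ x, B x x = 0 → x = 0)
    (hs : span R s = ⊤) : span R (H '' s) = ⊤ := by
  refine map_injective_of_injective (injective_of_anisotropic hB) ?_
  rw [map_span_image_eq_span hH, hs, Submodule.map_top, eq_comm, range_eq_top]
  exact hH.surjective

theorem orthogonal_span_image_eq (hH : Function.LeftInverse B H) (hB₀ : B.IsRefl)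
    (hB : ∀ x, B x x = 0 → x = 0) (horth : ∀ α ∈ s, ∀ β ∈ t, B (H α) (H β) = 0)
    (hst : span R (s ∪ t) = ⊤) : B.orthogonal (span R (H '' s)) = span R (H '' t) := by
  refine orthogonal_eq_of_le_orthogonal_of_sup_eq_top hB₀ hB
    (span_image_le_orthogonal_span_image hB₀ horth) ?_
  rw [← span_union, ← Set.image_union]
  exact span_image_eq_top hH hB hst

theorem disjoint_span_of_orthogonal (hH : Function.LeftInverse B H) (hB₀ : B.IsRefl)
    (hB : ∀ x, B x x = 0 → x = 0) (horth : ∀ α ∈ s, ∀ β ∈ t, B (H α) (H β) = 0) :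
    Disjoint (span R s) (span R t) := by
  rw [← map_span_image_eq_span hH s, ← map_span_image_eq_span hH t]
  exact disjoint_map (injective_of_anisotropic hB)
    (disjoint_of_le_orthogonal hB (span_image_le_orthogonal_span_image hB₀ horth))

end RootVectors

end LinearMap.BilinForm

namespace Submodule

variable {R V : Type*} [CommRing R] [AddCommGroup V] [Module R V] {a A : Submodule R V}

theorem eq_map_subtype_orthogonal_span_image {B : LinearMap.BilinForm R a} {H : Dual R a → a}
    (hH : Function.LeftInverse B H) {Φ : Set (Dual R a)}
    (hA : ∀ X, X ∈ A ↔ ∃ hX : X ∈ a, ∀ α ∈ Φ, α ⟨X, hX⟩ = 0) :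
    A = (B.orthogonal (span R (H '' Φ))).map a.subtype := by
  ext X
  simp [hA, LinearMap.BilinForm.mem_orthogonal_span_image_iff hH]

theorem eq_map_subtype_orthogonal {C : LinearMap.BilinForm R V} (hC : C.IsRefl)
    {N : Submodule R a} (hA : ∀ X, X ∈ A ↔ X ∈ a ∧ ∀ Y ∈ N.map a.subtype, C X Y = 0) :
    A = ((C.restrict a).orthogonal N).map a.subtype := by
  ext X
  simp only [hA, mem_map, subtype_apply, LinearMap.BilinForm.mem_orthogonal_iff,
    LinearMap.BilinForm.restrict_apply, LinearMap.domRestrict_apply]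
  constructor
  · rintro ⟨hX, h⟩
    exact ⟨⟨X, hX⟩, fun n hn => hC _ _ (h n ⟨n, hn, rfl⟩), rfl⟩
  · rintro ⟨y, hy, rfl⟩
    exact ⟨y.2, by rintro _ ⟨n, hn, rfl⟩; exact hC _ _ (hy n hn)⟩

end Submodule

namespace LieAlgebra

variable {R L : Type*} [CommRing R] [LieRing L] [LieAlgebra R L] {θ : L ≃ₗ⁅R⁆ L}

variable (θ) in
noncomputable def cartanForm : LinearMap.BilinForm R L :=
  -(killingForm R L).compl₂ (θ : L →ₗ[R] L)

@[simp] theorem cartanForm_apply (X Y : L) : cartanForm θ X Y = -killingForm R L X (θ Y) := rfl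

theorem isSymm_cartanForm (hθ : ∀ X, θ (θ X) = X) : (cartanForm θ).IsSymm := by
  refine ⟨fun X Y => ?_⟩
  rw [cartanForm_apply, cartanForm_apply, ← killingForm_of_equiv_apply θ, hθ,
    LieModule.traceForm_comm]

end LieAlgebra

open LieAlgebra LinearMap.BilinForm in
theorem product_canonical_extension_lemma_general
    {g : Type} [LieRing g] [LieAlgebra ℝ g]
    -- Cartan involution and the associated inner product
    (θ : g ≃ₗ⁅ℝ⁆ g) (hθinv : ∀ X, θ (θ X) = X)
    (hθpos : ∀ X : g, X ≠ 0 → 0 < -(killingForm ℝ g X (θ X)))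
    (ip : g → g → ℝ) (hip : ∀ X Y : g, ip X Y = -(killingForm ℝ g X (θ Y)))
    -- maximal abelian subspace 𝔞 of 𝔭
    (a : Submodule ℝ g)
    -- restricted root spaces and restricted roots
    (gsp : Module.Dual ℝ a → Submodule ℝ g)
    (Sigma : Set (Module.Dual ℝ a))
    (hSigma : Sigma = {lam | lam ≠ 0 ∧ gsp lam ≠ ⊥})
    -- positive and simple roots
    (Splus : Set (Module.Dual ℝ a))
    (hSplus_sub : Splus ⊆ Sigma)
    (Λ : Finset (Module.Dual ℝ a))
    (hΛ_span : Submodule.span ℝ (Λ : Set (Module.Dual ℝ a)) = ⊤)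
    -- root vectors H_λ ∈ 𝔞
    (Hroot : Module.Dual ℝ a → a)
    (hHroot : ∀ (lam : Module.Dual ℝ a) (H : a), lam H = ip (Hroot lam) H)
    -- the subspaces 𝔞_Φ, 𝔞^Φ, 𝔫_Φ, 𝔫^Φ associated with a subset Φ ⊆ Λ
    (aPhi : Finset (Module.Dual ℝ a) → Submodule ℝ g)
    (haPhi : ∀ (Φ : Finset (Module.Dual ℝ a)) (X : g),
      X ∈ aPhi Φ ↔ ∃ hX : X ∈ a, ∀ α ∈ Φ, α ⟨X, hX⟩ = 0)
    (aUp : Finset (Module.Dual ℝ a) → Submodule ℝ g)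
    (haUp : ∀ (Φ : Finset (Module.Dual ℝ a)) (X : g),
      X ∈ aUp Φ ↔ X ∈ a ∧ ∀ Y ∈ aPhi Φ, ip X Y = 0)
    (nPhi : Finset (Module.Dual ℝ a) → Submodule ℝ g)
    (hnPhi : ∀ Φ : Finset (Module.Dual ℝ a),
      nPhi Φ = ⨆ lam ∈ {μ | μ ∈ Splus ∧
        μ ∉ Submodule.span ℝ (Φ : Set (Module.Dual ℝ a))}, gsp lam)
    (nUp : Finset (Module.Dual ℝ a) → Submodule ℝ g)
    (hnUp : ∀ Φ : Finset (Module.Dual ℝ a),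
      nUp Φ = ⨆ lam ∈ {μ | μ ∈ Splus ∧
        μ ∈ Submodule.span ℝ (Φ : Set (Module.Dual ℝ a))}, gsp lam)
    -- the hypotheses of the lemma: Λ = Λ₁ ⊔ Λ₂, orthogonality, and splitting of the roots
    (Λ1 Λ2 : Finset (Module.Dual ℝ a))
    (hunion : (Λ : Set (Module.Dual ℝ a)) = ↑Λ1 ∪ ↑Λ2)
    (horth : ∀ α ∈ Λ1, ∀ β ∈ Λ2, ip (Hroot α) (Hroot β) = 0)
    (hsplit : ∀ lam ∈ Sigma,
      lam ∈ Submodule.span ℝ (Λ1 : Set (Module.Dual ℝ a)) ∨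
      lam ∈ Submodule.span ℝ (Λ2 : Set (Module.Dual ℝ a))) :
    aPhi Λ1 = aUp Λ2 ∧ nPhi Λ1 = nUp Λ2 ∧
      ∀ h : Submodule ℝ g, h ⊔ aPhi Λ1 ⊔ nPhi Λ1 = h ⊔ aUp Λ2 ⊔ nUp Λ2 := by
  have hip' : ∀ X Y, ip X Y = cartanForm θ X Y := fun X Y => by rw [hip, cartanForm_apply]
  set B := (cartanForm θ).restrict a
  have hB₀ : B.IsRefl := ((isSymm_cartanForm hθinv).restrict a).isRefl
  have hB : ∀ x, B x x = 0 → x = 0 := fun x hx => by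
    by_contra hx0
    exact (hθpos x (by simpa using hx0)).ne' (by simpa [B] using hx)
  have hH : Function.LeftInverse B Hroot := fun α =>
    LinearMap.ext fun x => by rw [hHroot α x, hip']; rfl
  have horth₁₂ : ∀ α ∈ Λ1, ∀ β ∈ Λ2, B (Hroot α) (Hroot β) = 0 := fun α hα β hβ => by
    rw [← horth α hα β hβ, hip']; rfl
  have hΛ : span ℝ ((Λ1 : Set (Dual ℝ a)) ∪ Λ2) = ⊤ := by rw [← hunion, hΛ_span]
  have haPhi' Φ := eq_map_subtype_orthogonal_span_image hH (haPhi Φ)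
  have haUp' := eq_map_subtype_orthogonal (isSymm_cartanForm hθinv).isRefl (A := aUp Λ2)
    (N := B.orthogonal (span ℝ (Hroot '' Λ2))) fun X => by
      rw [haUp, haPhi' Λ2]; simp only [hip']
  have haa : aPhi Λ1 = aUp Λ2 := by
    rw [haPhi', haUp', orthogonal_span_image_eq hH hB₀ hB
      (fun β hβ α hα => hB₀ _ _ (horth₁₂ α hα β hβ)) (by rwa [Set.union_comm]),
      orthogonal_span_image_eq hH hB₀ hB horth₁₂ hΛ]
  have hspan := disjoint_span_of_orthogonal hH hB₀ hB horth₁₂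
  have hroots : {μ | μ ∈ Splus ∧ μ ∉ span ℝ (Λ1 : Set (Dual ℝ a))} =
      {μ | μ ∈ Splus ∧ μ ∈ span ℝ (Λ2 : Set (Dual ℝ a))} :=
    Set.ext fun μ => and_congr_right fun hμ => ⟨(hsplit μ (hSplus_sub hμ)).resolve_left,
      fun h2 h1 => (hSigma ▸ hSplus_sub hμ).1 (disjoint_def.mp hspan μ h1 h2)⟩
  have hnn : nPhi Λ1 = nUp Λ2 := by rw [hnPhi, hnUp, hroots]
  exact ⟨haa, hnn, fun h => by rw [haa, hnn]⟩

/-- Lie-algebraic content of Lemma 5.1. In the restricted root space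
setting of a semisimple Lie algebra `𝔤` of noncompact type, if `Λ = Λ₁ ⊔ Λ₂` is a disjoint
union with `⟨H_α, H_β⟩ = 0` for all `α ∈ Λ₁`, `β ∈ Λ₂`, and every restricted root lies in
`span Λ₁` or in `span Λ₂`, then `𝔞_{Λ₁} = 𝔞^{Λ₂}` and `𝔫_{Λ₁} = 𝔫^{Λ₂}`; consequently
`𝔥 + 𝔞_{Λ₁} + 𝔫_{Λ₁} = 𝔥 + 𝔞^{Λ₂} + 𝔫^{Λ₂}` for every subspace `𝔥` of `𝔤`. -/
theorem product_canonical_extension_lemma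
    {g : Type} [LieRing g] [LieAlgebra ℝ g] [FiniteDimensional ℝ g]
    [LieAlgebra.IsSemisimple ℝ g]
    -- Cartan involution and the associated inner product
    (θ : g ≃ₗ⁅ℝ⁆ g) (hθinv : ∀ X, θ (θ X) = X)
    (hθpos : ∀ X : g, X ≠ 0 → 0 < -(killingForm ℝ g X (θ X)))
    (ip : g → g → ℝ) (hip : ∀ X Y : g, ip X Y = -(killingForm ℝ g X (θ Y)))
    -- maximal abelian subspace 𝔞 of 𝔭
    (a : Submodule ℝ g)
    (ha_p : ∀ H ∈ a, θ H = -H)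
    (ha_ab : ∀ H ∈ a, ∀ H' ∈ a, ⁅H, H'⁆ = (0 : g))
    (ha_max : ∀ X : g, θ X = -X → (∀ H ∈ a, ⁅H, X⁆ = 0) → X ∈ a)
    -- restricted root spaces and restricted roots
    (gsp : Module.Dual ℝ a → Submodule ℝ g)
    (hgsp : ∀ (lam : Module.Dual ℝ a) (X : g),
      X ∈ gsp lam ↔ ∀ H : a, ⁅(H : g), X⁆ = lam H • X)
    (Sigma : Set (Module.Dual ℝ a))
    (hSigma : Sigma = {lam | lam ≠ 0 ∧ gsp lam ≠ ⊥})
    (hdecomp : (⨆ lam ∈ insert (0 : Module.Dual ℝ a) Sigma, gsp lam) = ⊤)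
    -- positive and simple roots
    (Splus : Set (Module.Dual ℝ a))
    (hSplus_sub : Splus ⊆ Sigma)
    (hSigma_split : Sigma = Splus ∪ (Neg.neg '' Splus))
    (hSplus_disj : ∀ lam ∈ Splus, -lam ∉ Splus)
    (Λ : Finset (Module.Dual ℝ a))
    (hΛ_sub : (Λ : Set (Module.Dual ℝ a)) ⊆ Splus)
    (hΛ_indep : LinearIndependent ℝ
      (fun x : {x // x ∈ Λ} => (x : Module.Dual ℝ a)))
    (hΛ_span : Submodule.span ℝ (Λ : Set (Module.Dual ℝ a)) = ⊤)
    (c : Module.Dual ℝ a → Module.Dual ℝ a → ℤ)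
    (hc : ∀ lam ∈ Sigma, lam = ∑ α ∈ Λ, (c lam α : ℝ) • α)
    (hc_pos : ∀ lam ∈ Splus, ∀ α ∈ Λ, 0 ≤ c lam α)
    (hc_neg : ∀ lam ∈ Sigma, lam ∉ Splus → ∀ α ∈ Λ, c lam α ≤ 0)
    -- root vectors H_λ ∈ 𝔞
    (Hroot : Module.Dual ℝ a → a)
    (hHroot : ∀ (lam : Module.Dual ℝ a) (H : a), lam H = ip (Hroot lam) H)
    -- the subspaces 𝔞_Φ, 𝔞^Φ, 𝔫_Φ, 𝔫^Φ associated with a subset Φ ⊆ Λ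
    (aPhi : Finset (Module.Dual ℝ a) → Submodule ℝ g)
    (haPhi : ∀ (Φ : Finset (Module.Dual ℝ a)) (X : g),
      X ∈ aPhi Φ ↔ ∃ hX : X ∈ a, ∀ α ∈ Φ, α ⟨X, hX⟩ = 0)
    (aUp : Finset (Module.Dual ℝ a) → Submodule ℝ g)
    (haUp : ∀ (Φ : Finset (Module.Dual ℝ a)) (X : g),
      X ∈ aUp Φ ↔ X ∈ a ∧ ∀ Y ∈ aPhi Φ, ip X Y = 0)
    (nPhi : Finset (Module.Dual ℝ a) → Submodule ℝ g)
    (hnPhi : ∀ Φ : Finset (Module.Dual ℝ a),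
      nPhi Φ = ⨆ lam ∈ {μ | μ ∈ Splus ∧
        μ ∉ Submodule.span ℝ (Φ : Set (Module.Dual ℝ a))}, gsp lam)
    (nUp : Finset (Module.Dual ℝ a) → Submodule ℝ g)
    (hnUp : ∀ Φ : Finset (Module.Dual ℝ a),
      nUp Φ = ⨆ lam ∈ {μ | μ ∈ Splus ∧
        μ ∈ Submodule.span ℝ (Φ : Set (Module.Dual ℝ a))}, gsp lam)
    -- the hypotheses of the lemma: Λ = Λ₁ ⊔ Λ₂, orthogonality, and splitting of the roots
    (Λ1 Λ2 : Finset (Module.Dual ℝ a))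
    (hdisj : Disjoint (Λ1 : Set (Module.Dual ℝ a)) (Λ2 : Set (Module.Dual ℝ a)))
    (hunion : (Λ : Set (Module.Dual ℝ a)) = ↑Λ1 ∪ ↑Λ2)
    (horth : ∀ α ∈ Λ1, ∀ β ∈ Λ2, ip (Hroot α) (Hroot β) = 0)
    (hsplit : ∀ lam ∈ Sigma,
      lam ∈ Submodule.span ℝ (Λ1 : Set (Module.Dual ℝ a)) ∨
      lam ∈ Submodule.span ℝ (Λ2 : Set (Module.Dual ℝ a))) :
    aPhi Λ1 = aUp Λ2 ∧ nPhi Λ1 = nUp Λ2 ∧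
      ∀ h : Submodule ℝ g, h ⊔ aPhi Λ1 ⊔ nPhi Λ1 = h ⊔ aUp Λ2 ⊔ nUp Λ2 :=
  product_canonical_extension_lemma_general θ hθinv hθpos ip hip a gsp Sigma hSigma Splus hSplus_sub
    Λ hΛ_span Hroot hHroot aPhi haPhi aUp haUp nPhi hnPhi nUp hnUp Λ1 Λ2 hunion horth hsplit
end

section
/- Let α_j ∈ Φ ⊆ Λ, write Ψ = Φ∖{α_j}, and let 𝔳 be any subspace of 𝔫¹_{Ψ,Φ}. Then N_{𝔩_{Ψ,Φ}}(𝔫_{Ψ,Φ} ⊖ 𝔳) + (𝔫_{Ψ,Φ} ⊖ 𝔳) + 𝔞_Φ + 𝔫_Φ ⊆ N_{𝔩_{Λ∖{α_j}}}(𝔫_{Λ∖{α_j}} ⊖ 𝔳) + (𝔫_{Λ∖{α_j}} ⊖ 𝔳). (This is the final containment 𝔥^Λ_Φ ⊆ 𝔥_{Λ∖{α_j},𝔳} established in the proof of Lemma 5.3 of the paper: the canonical extension of a nilpotent construction on the boundary component B_Φ is contained in the corresponding nilpotent construction on M.) -/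
/-!
Everything is decided root by root, using the coefficient of `α_j` as a grading. The space `𝔳`
lies in root spaces `𝔤_ν` with `ν ∈ span Φ` and `c(ν, α_j) = 1`, so `θ𝔳` lies in the `𝔤_{-ν}`.
Hence `𝔳` is orthogonal to every `𝔤_μ` with `μ ∉ span Φ`, and `θ𝔳` commutes with `𝔞_Φ` and with
the `𝔤_μ`, `μ ∉ span Φ`, `c(μ, α_j) = 0` (then `μ - ν` has coefficients of both signs, so it is
not a root). Such `𝔤_μ` lie in `𝔩_{Λ∖{α_j}}` and normalize `𝔫_{Λ∖{α_j}} ⊖ 𝔳`; the other root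
spaces of `𝔫_Φ` lie in `𝔫_{Λ∖{α_j}} ⊖ 𝔳`. Finally `𝔫_{Λ∖{α_j}} = 𝔫_{Ψ,Φ} ⊕ 𝔯`, where the root
spaces in `𝔯` lie outside `span Φ`; so `𝔯 ⊆ 𝔫_{Λ∖{α_j}} ⊖ 𝔳`, and `𝔯` is normalized by
`𝔩_{Ψ,Φ}` because adding a root of `span Ψ` keeps a positive coefficient outside `Φ`. This carries
the normalizer of `𝔫_{Ψ,Φ} ⊖ 𝔳` in `𝔩_{Ψ,Φ}` into that of `𝔫_{Λ∖{α_j}} ⊖ 𝔳`.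
-/

/-- The normalizer of the subspace `W` inside the subspace `l`:
`N_l(W) = {X ∈ l : ⁅X, W⁆ ⊆ W}`. -/
def normalizerIn {g : Type} [LieRing g] [LieAlgebra ℝ g] (l W : Submodule ℝ g) :
    Submodule ℝ g where
  carrier := {X : g | X ∈ l ∧ ∀ w ∈ W, ⁅X, w⁆ ∈ W}
  add_mem' := by
    rintro x y ⟨hx, hx'⟩ ⟨hy, hy'⟩
    exact ⟨l.add_mem hx hy, fun w hw => by
      rw [add_lie]; exact W.add_mem (hx' w hw) (hy' w hw)⟩
  zero_mem' := ⟨l.zero_mem, fun w hw => by rw [zero_lie]; exact W.zero_mem⟩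
  smul_mem' := by
    rintro t x ⟨hx, hx'⟩
    exact ⟨l.smul_mem t hx, fun w hw => by
      rw [smul_lie]; exact W.smul_mem t (hx' w hw)⟩

/-- The orthogonal complement `V ⊖ W` of `W` in `V` with respect to the inner product
`⟨X, Y⟩ = -B(X, θY)` associated with the Cartan involution `θ` and the Killing form `B`. -/
def orthCompl {g : Type} [LieRing g] [LieAlgebra ℝ g] [Module.Finite ℝ g]
    (θ : g ≃ₗ⁅ℝ⁆ g) (V W : Submodule ℝ g) : Submodule ℝ g where
  carrier := {X : g | X ∈ V ∧ ∀ w ∈ W, killingForm ℝ g X (θ w) = 0}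
  add_mem' := by
    rintro x y ⟨hx, hx'⟩ ⟨hy, hy'⟩
    refine ⟨V.add_mem hx hy, fun w hw => ?_⟩
    rw [map_add, LinearMap.add_apply, hx' w hw, hy' w hw, add_zero]
  zero_mem' := ⟨V.zero_mem, fun w hw => by rw [map_zero, LinearMap.zero_apply]⟩
  smul_mem' := by
    rintro t x ⟨hx, hx'⟩
    refine ⟨V.smul_mem t hx, fun w hw => ?_⟩
    rw [map_smul, LinearMap.smul_apply, hx' w hw, smul_zero]

/-- The subspace spanned by all brackets `⁅x, y⁆` with `x ∈ U`, `y ∈ V`. -/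
def bracketSpan {g : Type} [LieRing g] [LieAlgebra ℝ g] (U V : Submodule ℝ g) :
    Submodule ℝ g :=
  Submodule.span ℝ {z : g | ∃ x ∈ U, ∃ y ∈ V, z = ⁅x, y⁆}

open Module Submodule

structure IsSimpleSystem (K : Type*) {V : Type*} [Field K] [AddCommGroup V] [Module K V]
    (Sigma Splus : Set V) (Λ : Finset V) (c : V → V → ℤ) : Prop where
  pos_subset : Splus ⊆ Sigma
  linearIndepOn : LinearIndepOn K id (Λ : Set V)
  eq_sum : ∀ μ ∈ Sigma, μ = ∑ α ∈ Λ, (c μ α : K) • α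
  coeff_nonneg : ∀ μ ∈ Splus, ∀ α ∈ Λ, 0 ≤ c μ α
  coeff_nonpos : ∀ μ ∈ Sigma, μ ∉ Splus → ∀ α ∈ Λ, c μ α ≤ 0

namespace IsSimpleSystem

variable {K V : Type*} [Field K] [AddCommGroup V] [Module K V]
  {Sigma Splus : Set V} {Λ S T : Finset V} {c : V → V → ℤ} {μ ν α β : V}

theorem coeff_eq_of_eq_sum (h : IsSimpleSystem K Sigma Splus Λ c) (hμ : μ ∈ Sigma)
    {f : V → K} (hf : μ = ∑ α ∈ Λ, f α • α) (hα : α ∈ Λ) : (c μ α : K) = f α :=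
  linearIndepOn_finset_iffₛ.mp h.linearIndepOn _ _ ((h.eq_sum μ hμ).symm.trans hf) α hα

theorem mem_pos_of_coeff_pos (h : IsSimpleSystem K Sigma Splus Λ c) (hμ : μ ∈ Sigma)
    (hα : α ∈ Λ) (hpos : 0 < c μ α) : μ ∈ Splus := by
  by_contra hμ'
  exact (h.coeff_nonpos μ hμ hμ' α hα).not_gt hpos

variable [CharZero K]

theorem coeff_add (h : IsSimpleSystem K Sigma Splus Λ c) (hμ : μ ∈ Sigma) (hν : ν ∈ Sigma)
    (hμν : μ + ν ∈ Sigma) (hα : α ∈ Λ) : c (μ + ν) α = c μ α + c ν α := by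
  have := h.coeff_eq_of_eq_sum hμν (f := fun β => (c μ β : K) + c ν β) (by
    simp only [add_smul, Finset.sum_add_distrib, ← h.eq_sum μ hμ, ← h.eq_sum ν hν]) hα
  exact_mod_cast this

theorem coeff_sub (h : IsSimpleSystem K Sigma Splus Λ c) (hμ : μ ∈ Sigma) (hν : ν ∈ Sigma)
    (hμν : μ - ν ∈ Sigma) (hα : α ∈ Λ) : c (μ - ν) α = c μ α - c ν α := by
  have := h.coeff_eq_of_eq_sum hμν (f := fun β => (c μ β : K) - c ν β) (by
    simp only [sub_smul, Finset.sum_sub_distrib, ← h.eq_sum μ hμ, ← h.eq_sum ν hν]) hα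
  exact_mod_cast this

theorem mem_span_iff (h : IsSimpleSystem K Sigma Splus Λ c) (hμ : μ ∈ Sigma) (hS : S ⊆ Λ) :
    μ ∈ span K (S : Set V) ↔ ∀ α ∈ Λ, α ∉ S → c μ α = 0 := by
  constructor
  · intro hμS α hα hαS
    obtain ⟨f, hfS, hf⟩ := mem_span_finset.mp hμS
    have hf0 : ∀ β ∉ S, f β = 0 := fun β hβ =>
      Function.notMem_support.mp fun hβf => hβ (hfS hβf)
    have hμf : μ = ∑ β ∈ Λ, f β • β := by
      rw [← hf]
      exact Finset.sum_subset hS fun β _ hβ => by rw [hf0 β hβ, zero_smul]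
    exact_mod_cast (h.coeff_eq_of_eq_sum hμ hμf hα).trans (hf0 α hαS)
  · intro hzero
    rw [h.eq_sum μ hμ, ← Finset.sum_subset hS fun β hβ hβS => by
      rw [hzero β hβ hβS, Int.cast_zero, zero_smul]]
    exact sum_mem fun β hβ => smul_mem _ _ (subset_span hβ)

theorem notMem_span_erase [DecidableEq V] (h : IsSimpleSystem K Sigma Splus Λ c)
    (hμ : μ ∈ Sigma) (hS : S ⊆ Λ) (hμS : μ ∈ span K (S : Set V))
    (hμα : μ ∉ span K (S.erase α : Set V)) : μ ∉ span K (Λ.erase α : Set V) := by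
  refine fun hμΛ => hμα ((h.mem_span_iff hμ ((S.erase_subset α).trans hS)).mpr fun β hβ hβS => ?_)
  by_cases hβα : β = α
  · exact (h.mem_span_iff hμ (Λ.erase_subset α)).mp hμΛ β hβ (hβα ▸ Λ.notMem_erase α)
  · exact (h.mem_span_iff hμ hS).mp hμS β hβ fun hβS' => hβS (Finset.mem_erase.mpr ⟨hβα, hβS'⟩)

theorem exists_coeff_pos_of_notMem_span (h : IsSimpleSystem K Sigma Splus Λ c) (hμ : μ ∈ Splus)
    (hS : S ⊆ Λ) (hμS : μ ∉ span K (S : Set V)) : ∃ α ∈ Λ, α ∉ S ∧ 0 < c μ α := by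
  contrapose! hμS
  exact (h.mem_span_iff (h.pos_subset hμ) hS).mpr fun α hα hαS =>
    le_antisymm (hμS α hα hαS) (h.coeff_nonneg μ hμ α hα)

theorem add_mem_pos_of_mem_span (h : IsSimpleSystem K Sigma Splus Λ c) (hS : S ⊆ Λ)
    (hμ : μ ∈ Sigma) (hμS : μ ∈ span K (S : Set V)) (hν : ν ∈ Splus)
    (hνS : ν ∉ span K (S : Set V)) (hμν : μ + ν ∈ Sigma) : μ + ν ∈ Splus := by
  obtain ⟨α, hα, hαS, hpos⟩ := h.exists_coeff_pos_of_notMem_span hν hS hνS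
  refine h.mem_pos_of_coeff_pos hμν hα ?_
  rwa [h.coeff_add hμ (h.pos_subset hν) hμν hα, (h.mem_span_iff hμ hS).mp hμS α hα hαS,
    zero_add]

theorem sub_notMem_of_coeff_lt (h : IsSimpleSystem K Sigma Splus Λ c) (hμ : μ ∈ Sigma)
    (hν : ν ∈ Sigma) (hα : α ∈ Λ) (hβ : β ∈ Λ) (hαlt : c ν α < c μ α) (hβlt : c μ β < c ν β) :
    μ - ν ∉ Sigma := by
  intro hμν
  have hcα := h.coeff_sub hμ hν hμν hα
  have hcβ := h.coeff_sub hμ hν hμν hβ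
  by_cases hpos : μ - ν ∈ Splus
  · have := h.coeff_nonneg _ hpos β hβ
    omega
  · have := h.coeff_nonpos _ hμν hpos α hα
    omega

theorem sub_notMem_of_mem_span_erase [DecidableEq V] (h : IsSimpleSystem K Sigma Splus Λ c)
    (hS : S ⊆ Λ) (hα : α ∈ Λ) (hμ : μ ∈ Splus) (hμS : μ ∉ span K (S : Set V))
    (hμα : μ ∈ span K (Λ.erase α : Set V)) (hν : ν ∈ Sigma) (hνS : ν ∈ span K (S : Set V))
    (hνα : 0 < c ν α) : μ - ν ∉ Sigma := by
  obtain ⟨β, hβ, hβS, hμβ⟩ := h.exists_coeff_pos_of_notMem_span hμ hS hμS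
  have hνβ := (h.mem_span_iff hν hS).mp hνS β hβ hβS
  have hμα' := (h.mem_span_iff (h.pos_subset hμ) (Λ.erase_subset α)).mp hμα α hα
    (Λ.notMem_erase α)
  exact h.sub_notMem_of_coeff_lt (h.pos_subset hμ) hν hβ hα (by omega) (by omega)

end IsSimpleSystem

theorem Submodule.apply_mem_of_mem_biSup {R M N ι : Type*} [Semiring R] [AddCommMonoid M]
    [AddCommMonoid N] [Module R M] [Module R N] {p : ι → Submodule R M} {s : Set ι}
    (f : M →ₗ[R] N) {q : Submodule R N} (h : ∀ i ∈ s, ∀ x ∈ p i, f x ∈ q) {x : M}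
    (hx : x ∈ ⨆ i ∈ s, p i) : f x ∈ q :=
  (iSup₂_le fun i hi y hy => h i hi y hy : (⨆ i ∈ s, p i) ≤ q.comap f) hx

theorem Module.Dual.apply_eq_zero_of_mem_span {R M : Type*} [CommSemiring R] [AddCommMonoid M]
    [Module R M] {s : Set (Dual R M)} {x : M} (h : ∀ α ∈ s, α x = 0) {ν : Dual R M}
    (hν : ν ∈ span R s) : ν x = 0 :=
  (span_le.mpr h : span R s ≤ LinearMap.ker (Dual.eval R M x)) hν

section RestrictedRootSpace

variable {R L : Type*} [CommRing R] [LieRing L] [LieAlgebra R L] {a : Submodule R L}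
  {μ ν : Dual R a} {S : Set (Dual R a)} {X Y : L}

def restrictedRootSpace (a : Submodule R L) (μ : Dual R a) : Submodule R L :=
  ⨅ H : a, LinearMap.ker (LieAlgebra.ad R L H - μ H • LinearMap.id)

def restrictedRoots (a : Submodule R L) : Set (Dual R a) :=
  {μ | μ ≠ 0 ∧ restrictedRootSpace a μ ≠ ⊥}

theorem mem_restrictedRootSpace :
    X ∈ restrictedRootSpace a μ ↔ ∀ H : a, ⁅(H : L), X⁆ = μ H • X := by
  simp [restrictedRootSpace, sub_eq_zero]

theorem restrictedRootSpace_eq_bot (hμ : μ ≠ 0) (hroot : μ ∉ restrictedRoots a) :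
    restrictedRootSpace a μ = ⊥ :=
  not_not.mp fun h => hroot ⟨hμ, h⟩

theorem restrictedRootSpace_le_biSup (hμ : μ ≠ 0) (hS : μ ∈ restrictedRoots a → μ ∈ S) :
    restrictedRootSpace a μ ≤ ⨆ ν ∈ S, restrictedRootSpace a ν := by
  by_cases hroot : μ ∈ restrictedRoots a
  · exact le_iSup₂ (f := fun ν _ => restrictedRootSpace a ν) μ (hS hroot)
  · rw [restrictedRootSpace_eq_bot hμ hroot]
    exact bot_le

theorem lie_mem_restrictedRootSpace_add (hX : X ∈ restrictedRootSpace a μ)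
    (hY : Y ∈ restrictedRootSpace a ν) : ⁅X, Y⁆ ∈ restrictedRootSpace a (μ + ν) := by
  rw [mem_restrictedRootSpace] at *
  intro H
  rw [leibniz_lie, hX H, hY H, smul_lie, lie_smul, LinearMap.add_apply, add_smul]

theorem mem_restrictedRootSpace_zero (ha : ∀ H ∈ a, ∀ H' ∈ a, ⁅H, H'⁆ = 0) (hX : X ∈ a) :
    X ∈ restrictedRootSpace a 0 :=
  mem_restrictedRootSpace.mpr fun H => by rw [ha _ H.2 X hX, LinearMap.zero_apply, zero_smul]

theorem lie_mem_of_mem_biSup {M : Submodule R L} (hX : X ∈ restrictedRootSpace a μ)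
    (hS : ∀ ν ∈ S, restrictedRootSpace a (μ + ν) ≤ M)
    (hY : Y ∈ ⨆ ν ∈ S, restrictedRootSpace a ν) : ⁅X, Y⁆ ∈ M :=
  apply_mem_of_mem_biSup (LieAlgebra.ad R L X)
    (fun ν hν _ hZ => hS ν hν (lie_mem_restrictedRootSpace_add hX hZ)) hY

variable (θ : L ≃ₗ⁅R⁆ L)

theorem map_mem_restrictedRootSpace_neg (hθ : ∀ H ∈ a, θ H = -H)
    (hX : X ∈ restrictedRootSpace a μ) : θ X ∈ restrictedRootSpace a (-μ) := by
  rw [mem_restrictedRootSpace] at *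
  intro H
  have hH : (H : L) = θ (-(H : L)) := by rw [map_neg, hθ H H.2, neg_neg]
  rw [hH, ← LieEquiv.map_lie, neg_lie, hX H, map_neg, map_smul, LinearMap.neg_apply, neg_smul]

theorem lie_map_eq_zero_of_mem_biSup (hθ : ∀ H ∈ a, θ H = -H)
    (hX : X ∈ restrictedRootSpace a μ) (hS : ∀ ν ∈ S, restrictedRootSpace a (μ - ν) = ⊥)
    (hY : Y ∈ ⨆ ν ∈ S, restrictedRootSpace a ν) : ⁅X, θ Y⁆ = 0 := by
  refine (mem_bot R).mp (apply_mem_of_mem_biSup (LieAlgebra.ad R L X ∘ₗ θ.toLinearMap)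
    (fun ν hν Z hZ => ?_) hY)
  rw [← hS ν hν, sub_eq_add_neg]
  exact lie_mem_restrictedRootSpace_add hX (map_mem_restrictedRootSpace_neg θ hθ hZ)

theorem lie_map_eq_zero_of_apply_eq_zero (hθ : ∀ H ∈ a, θ H = -H) (hX : X ∈ a)
    (hS : ∀ ν ∈ S, ν ⟨X, hX⟩ = 0) (hY : Y ∈ ⨆ ν ∈ S, restrictedRootSpace a ν) :
    ⁅X, θ Y⁆ = 0 := by
  refine (mem_bot R).mp (apply_mem_of_mem_biSup (LieAlgebra.ad R L X ∘ₗ θ.toLinearMap)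
    (fun ν hν Z hZ => ?_) hY)
  have hXZ := mem_restrictedRootSpace.mp (map_mem_restrictedRootSpace_neg θ hθ hZ) ⟨X, hX⟩
  rwa [LinearMap.neg_apply, hS ν hν, neg_zero, zero_smul, ← mem_bot R] at hXZ

end RestrictedRootSpace

section KillingForm

variable {K L : Type*} [Field K] [LieRing L] [LieAlgebra K L]
  {a : Submodule K L} {μ ν : Dual K a} {S : Set (Dual K a)} {X Y : L}

theorem killingForm_eq_zero_of_add_ne_zero (hμν : μ + ν ≠ 0)
    (hX : X ∈ restrictedRootSpace a μ) (hY : Y ∈ restrictedRootSpace a ν) :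
    killingForm K L X Y = 0 := by
  obtain ⟨H, hH⟩ : ∃ H : a, (μ + ν) H ≠ 0 := by
    by_contra! h
    exact hμν (LinearMap.ext h)
  have hinv := LieModule.traceForm_apply_lie_apply' K L L (H : L) X Y
  rw [mem_restrictedRootSpace.mp hX H, mem_restrictedRootSpace.mp hY H, map_smul, map_smul,
    LinearMap.smul_apply, smul_eq_mul, smul_eq_mul] at hinv
  have : (μ + ν) H * killingForm K L X Y = 0 := by
    rw [LinearMap.add_apply]
    linear_combination hinv
  exact (mul_eq_zero.mp this).resolve_left hH

theorem killingForm_map_eq_zero_of_notMem (θ : L ≃ₗ⁅K⁆ L) (hθ : ∀ H ∈ a, θ H = -H)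
    (hμ : μ ∉ S) (hX : X ∈ restrictedRootSpace a μ)
    (hY : Y ∈ ⨆ ν ∈ S, restrictedRootSpace a ν) : killingForm K L X (θ Y) = 0 := by
  refine (mem_bot K).mp (apply_mem_of_mem_biSup (killingForm K L X ∘ₗ θ.toLinearMap)
    (fun ν hν Z hZ => (mem_bot K).mpr ?_) hY)
  refine killingForm_eq_zero_of_add_ne_zero (fun h => hμ ?_) hX
    (map_mem_restrictedRootSpace_neg θ hθ hZ)
  rwa [add_neg_eq_zero.mp h]

end KillingForm

section Normalizer

variable {g : Type} [LieRing g] [LieAlgebra ℝ g]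

theorem normalizerIn_mono {l l' W W' R : Submodule ℝ g} (hl : l ≤ l') (hW : W ≤ W')
    (hW' : W' ≤ W ⊔ R) (hR : R ≤ W') (hlR : ∀ X ∈ l, ∀ z ∈ R, ⁅X, z⁆ ∈ R) :
    normalizerIn l W ≤ normalizerIn l' W' := by
  rintro X ⟨hXl, hXW⟩
  refine ⟨hl hXl, fun w hw => ?_⟩
  obtain ⟨y, hy, z, hz, rfl⟩ := mem_sup.mp (hW' hw)
  rw [lie_add]
  exact add_mem (hW (hXW y hy)) (hR (hlR X hXl z hz))

variable [Module.Finite ℝ g] {θ : g ≃ₗ⁅ℝ⁆ g}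

theorem orthCompl_mono_left {V V' W : Submodule ℝ g} (h : V ≤ V') :
    orthCompl θ V W ≤ orthCompl θ V' W :=
  fun _ hX => ⟨h hX.1, hX.2⟩

theorem orthCompl_le_sup {V V' R W : Submodule ℝ g} (hV' : V' ≤ V ⊔ R)
    (hR : R ≤ orthCompl θ V' W) : orthCompl θ V' W ≤ orthCompl θ V W ⊔ R := by
  intro w hw
  obtain ⟨y, hy, z, hz, rfl⟩ := mem_sup.mp (hV' hw.1)
  refine add_mem_sup ⟨hy, fun u hu => ?_⟩ hz
  have hyz := hw.2 u hu
  rwa [map_add, LinearMap.add_apply, (hR hz).2 u hu, add_zero] at hyz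

theorem lie_mem_orthCompl {V W : Submodule ℝ g} {X u : g} (hV : ∀ y ∈ V, ⁅X, y⁆ ∈ V)
    (hW : ∀ w ∈ W, ⁅X, θ w⁆ = 0) (hu : u ∈ orthCompl θ V W) : ⁅X, u⁆ ∈ orthCompl θ V W :=
  ⟨hV u hu.1, fun w hw => by
    rw [LieModule.traceForm_apply_lie_apply', hW w hw, map_zero, neg_zero]⟩

theorem restrictedRootSpace_le_orthCompl {a : Submodule ℝ g} (hθ : ∀ H ∈ a, θ H = -H)
    {μ : Dual ℝ a} {U : Set (Dual ℝ a)} {V v : Submodule ℝ g} (hμU : μ ∉ U)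
    (hv : v ≤ ⨆ ν ∈ U, restrictedRootSpace a ν) (hμV : restrictedRootSpace a μ ≤ V) :
    restrictedRootSpace a μ ≤ orthCompl θ V v :=
  fun _ hX => ⟨hμV hX, fun _ hw => killingForm_map_eq_zero_of_notMem θ hθ hμU hX (hv hw)⟩

end Normalizer

section NilpotentConstruction

local notation "𝔤[" S "]" => ⨆ μ ∈ S, restrictedRootSpace _ μ

variable {g : Type} [LieRing g] [LieAlgebra ℝ g] {a : Submodule ℝ g}
  {Splus : Set (Dual ℝ a)} {Λ Φ : Finset (Dual ℝ a)} {c : Dual ℝ a → Dual ℝ a → ℤ}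
  {α : Dual ℝ a}

theorem restrictedRootSpace_add_le_biSup (hS : IsSimpleSystem ℝ (restrictedRoots a) Splus Λ c)
    {T : Finset (Dual ℝ a)} (hT : T ⊆ Λ) {p : Submodule ℝ (Dual ℝ a)} {U : Set (Dual ℝ a)}
    (hU : ∀ ξ ∈ Splus, ξ ∉ p → ξ ∉ span ℝ ↑T → ξ ∈ U) {μ ν : Dual ℝ a}
    (hμ : μ ∈ restrictedRoots a) (hμT : μ ∈ span ℝ ↑T) (hμp : μ ∈ p)
    (hν : ν ∈ Splus) (hνT : ν ∉ span ℝ ↑T) (hνp : ν ∉ p) :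
    restrictedRootSpace a (μ + ν) ≤ 𝔤[U] := by
  have hμνT : μ + ν ∉ span ℝ ↑T := fun h => hνT ((add_mem_cancel_left hμT).mp h)
  refine restrictedRootSpace_le_biSup (fun h => hμνT (h ▸ zero_mem _)) fun hμν => ?_
  exact hU _ (hS.add_mem_pos_of_mem_span hT hμ hμT hν hνT hμν)
    (fun h => hνp ((add_mem_cancel_left hμp).mp h)) hμνT

theorem restrictedRootSpace_sup_le_normalizerIn
    (hS : IsSimpleSystem ℝ (restrictedRoots a) Splus Λ c) {Ψ T : Finset (Dual ℝ a)}
    (hT : T ⊆ Λ) (hΨΦ : span ℝ (Ψ : Set (Dual ℝ a)) ≤ span ℝ ↑Φ)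
    (hΨT : span ℝ (Ψ : Set (Dual ℝ a)) ≤ span ℝ ↑T) :
    restrictedRootSpace a 0 ⊔ 𝔤[{μ | μ ∈ restrictedRoots a ∧ μ ∈ span ℝ ↑Ψ}] ≤
      normalizerIn ⊤ 𝔤[{ν | ν ∈ Splus ∧ ν ∉ span ℝ ↑Φ ∧ ν ∉ span ℝ ↑T}] := by
  refine sup_le (fun X hX => ?_) (iSup₂_le fun μ hμ X hX => ?_) <;>
    refine ⟨mem_top, fun z hz => lie_mem_of_mem_biSup hX (fun ν hν => ?_) hz⟩
  · rw [zero_add]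
    exact le_iSup₂ (f := fun ν _ => restrictedRootSpace a ν) ν hν
  · obtain ⟨hμ, hμΨ⟩ := hμ
    obtain ⟨hν, hνΦ, hνT⟩ := hν
    refine restrictedRootSpace_add_le_biSup hS hT ?_ hμ (hΨT hμΨ) (hΨΦ hμΨ) hν hνT hνΦ
    exact fun ξ h₁ h₂ h₃ => ⟨h₁, h₂, h₃⟩

theorem mem_normalizerIn_orthCompl [FiniteDimensional ℝ g] {θ : g ≃ₗ⁅ℝ⁆ g} {v : Submodule ℝ g}
    {U : Set (Dual ℝ a)} (ha : ∀ H ∈ a, ∀ H' ∈ a, ⁅H, H'⁆ = 0)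
    (hθ : ∀ H ∈ a, θ H = -H) {S : Set (Dual ℝ a)} (hv : v ≤ 𝔤[U]) {l : Submodule ℝ g}
    (hl : restrictedRootSpace a 0 ≤ l) {X : g} (hX : X ∈ a) (hXU : ∀ ν ∈ U, ν ⟨X, hX⟩ = 0) :
    X ∈ normalizerIn l (orthCompl θ 𝔤[S] v) := by
  have hX0 := mem_restrictedRootSpace_zero ha hX
  refine ⟨hl hX0, fun u hu => lie_mem_orthCompl (fun y hy => ?_)
    (fun w hw => lie_map_eq_zero_of_apply_eq_zero θ hθ hX hXU (hv hw)) hu⟩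
  exact lie_mem_of_mem_biSup hX0 (fun ν hν => by
    rw [zero_add]; exact le_iSup₂ (f := fun ν _ => restrictedRootSpace a ν) ν hν) hy

variable [DecidableEq (Dual ℝ a)]

theorem biSup_span_erase_le (hS : IsSimpleSystem ℝ (restrictedRoots a) Splus Λ c)
    (hΦΛ : Φ ⊆ Λ) :
    𝔤[{μ | μ ∈ Splus ∧ μ ∈ span ℝ ↑Φ ∧ μ ∉ span ℝ ↑(Φ.erase α)}] ≤
      𝔤[{μ | μ ∈ Splus ∧ μ ∉ span ℝ ↑(Λ.erase α)}] :=
  biSup_mono fun _ ⟨hμ, hμΦ, hμΨ⟩ => ⟨hμ, hS.notMem_span_erase (hS.pos_subset hμ) hΦΛ hμΦ hμΨ⟩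

theorem biSup_span_erase_le_sup (hΦΛ : Φ ⊆ Λ) :
    𝔤[{μ | μ ∈ Splus ∧ μ ∉ span ℝ ↑(Λ.erase α)}] ≤
      𝔤[{μ | μ ∈ Splus ∧ μ ∈ span ℝ ↑Φ ∧ μ ∉ span ℝ ↑(Φ.erase α)}] ⊔
        𝔤[{μ | μ ∈ Splus ∧ μ ∉ span ℝ ↑Φ ∧ μ ∉ span ℝ ↑(Λ.erase α)}] := by
  refine iSup₂_le fun μ ⟨hμ, hμT⟩ => ?_
  by_cases hμΦ : μ ∈ span ℝ ↑Φ
  · refine le_sup_of_le_left (le_iSup₂ (f := fun μ _ => restrictedRootSpace a μ) μ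
      ⟨hμ, hμΦ, fun hμΨ => hμT (span_mono ?_ hμΨ)⟩)
    exact Finset.coe_subset.mpr (Finset.erase_subset_erase α hΦΛ)
  · exact le_sup_of_le_right (le_iSup₂ (f := fun μ _ => restrictedRootSpace a μ) μ
      ⟨hμ, hμΦ, hμT⟩)

variable [FiniteDimensional ℝ g] {θ : g ≃ₗ⁅ℝ⁆ g} {v : Submodule ℝ g} {U : Set (Dual ℝ a)}

theorem normalizerIn_orthCompl_le (hS : IsSimpleSystem ℝ (restrictedRoots a) Splus Λ c)
    (hθ : ∀ H ∈ a, θ H = -H) (hΦΛ : Φ ⊆ Λ) (hv : v ≤ 𝔤[U])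
    (hUΦ : ∀ ν ∈ U, ν ∈ span ℝ ↑Φ) {l : Submodule ℝ g}
    (hl : l ≤ restrictedRootSpace a 0) :
    normalizerIn (l ⊔ 𝔤[{μ | μ ∈ restrictedRoots a ∧ μ ∈ span ℝ ↑(Φ.erase α)}])
        (orthCompl θ
          𝔤[{μ | μ ∈ Splus ∧ μ ∈ span ℝ ↑Φ ∧ μ ∉ span ℝ ↑(Φ.erase α)}] v) ≤
      normalizerIn
        (restrictedRootSpace a 0 ⊔ 𝔤[{μ | μ ∈ restrictedRoots a ∧ μ ∈ span ℝ ↑(Λ.erase α)}])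
        (orthCompl θ 𝔤[{μ | μ ∈ Splus ∧ μ ∉ span ℝ ↑(Λ.erase α)}] v) := by
  have hΨΦ : span ℝ (Φ.erase α : Set (Dual ℝ a)) ≤ span ℝ ↑Φ :=
    span_mono (Finset.coe_subset.mpr (Φ.erase_subset α))
  have hΨT : span ℝ (Φ.erase α : Set (Dual ℝ a)) ≤ span ℝ ↑(Λ.erase α) :=
    span_mono (Finset.coe_subset.mpr (Finset.erase_subset_erase α hΦΛ))
  have hR : 𝔤[{μ | μ ∈ Splus ∧ μ ∉ span ℝ ↑Φ ∧ μ ∉ span ℝ ↑(Λ.erase α)}] ≤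
      orthCompl θ 𝔤[{μ | μ ∈ Splus ∧ μ ∉ span ℝ ↑(Λ.erase α)}] v :=
    iSup₂_le fun μ ⟨hμ, hμΦ, hμT⟩ => restrictedRootSpace_le_orthCompl hθ
      (fun hμU => hμΦ (hUΦ μ hμU)) hv (le_iSup₂ (f := fun μ _ => restrictedRootSpace a μ) μ
        ⟨hμ, hμT⟩)
  refine normalizerIn_mono (sup_le_sup hl (biSup_mono fun _ h => ⟨h.1, hΨT h.2⟩))
    (orthCompl_mono_left (biSup_span_erase_le hS hΦΛ))
    (orthCompl_le_sup (biSup_span_erase_le_sup hΦΛ) hR) hR fun X hX => ?_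
  exact (((sup_le_sup_right hl _).trans
    (restrictedRootSpace_sup_le_normalizerIn hS (Λ.erase_subset α) hΨΦ hΨT)) hX).2

theorem restrictedRootSpace_le_normalizerIn
    (hS : IsSimpleSystem ℝ (restrictedRoots a) Splus Λ c) (hθ : ∀ H ∈ a, θ H = -H)
    (hΦΛ : Φ ⊆ Λ) (hα : α ∈ Λ)
    (hv : v ≤ 𝔤[{ν | ν ∈ Splus ∧ ν ∈ span ℝ ↑Φ ∧ c ν α = 1}]) {μ : Dual ℝ a}
    (hμ : μ ∈ Splus) (hμΦ : μ ∉ span ℝ ↑Φ) (hμT : μ ∈ span ℝ ↑(Λ.erase α)) :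
    restrictedRootSpace a μ ≤
      normalizerIn
        (restrictedRootSpace a 0 ⊔ 𝔤[{μ | μ ∈ restrictedRoots a ∧ μ ∈ span ℝ ↑(Λ.erase α)}])
        (orthCompl θ 𝔤[{μ | μ ∈ Splus ∧ μ ∉ span ℝ ↑(Λ.erase α)}] v) := by
  intro X hX
  refine ⟨mem_sup_right (le_iSup₂ (f := fun μ _ => restrictedRootSpace a μ) μ
    ⟨hS.pos_subset hμ, hμT⟩ hX), fun u hu => lie_mem_orthCompl (fun y hy => ?_)
      (fun w hw => lie_map_eq_zero_of_mem_biSup θ hθ hX (fun ν hν => ?_) (hv hw)) hu⟩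
  · refine lie_mem_of_mem_biSup hX (fun ν hν => ?_) hy
    refine restrictedRootSpace_add_le_biSup hS (Λ.erase_subset α) ?_ (hS.pos_subset hμ) hμT hμT
      hν.1 hν.2 hν.2
    exact fun ξ h₁ _ h₃ => ⟨h₁, h₃⟩
  · obtain ⟨hν, hνΦ, hνα⟩ := hν
    refine restrictedRootSpace_eq_bot (sub_ne_zero.mpr fun h => hμΦ (h ▸ hνΦ)) ?_
    exact hS.sub_notMem_of_mem_span_erase hΦΛ hα hμ hμΦ hμT (hS.pos_subset hν) hνΦ (by omega)

theorem restrictedRootSpace_le_normalizerIn_sup_orthCompl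
    (hS : IsSimpleSystem ℝ (restrictedRoots a) Splus Λ c) (hθ : ∀ H ∈ a, θ H = -H)
    (hΦΛ : Φ ⊆ Λ) (hα : α ∈ Λ)
    (hv : v ≤ 𝔤[{ν | ν ∈ Splus ∧ ν ∈ span ℝ ↑Φ ∧ c ν α = 1}]) {μ : Dual ℝ a}
    (hμ : μ ∈ Splus) (hμΦ : μ ∉ span ℝ ↑Φ) :
    restrictedRootSpace a μ ≤
      normalizerIn
        (restrictedRootSpace a 0 ⊔ 𝔤[{μ | μ ∈ restrictedRoots a ∧ μ ∈ span ℝ ↑(Λ.erase α)}])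
        (orthCompl θ 𝔤[{μ | μ ∈ Splus ∧ μ ∉ span ℝ ↑(Λ.erase α)}] v) ⊔
      orthCompl θ 𝔤[{μ | μ ∈ Splus ∧ μ ∉ span ℝ ↑(Λ.erase α)}] v := by
  by_cases hμT : μ ∈ span ℝ ↑(Λ.erase α)
  · exact le_sup_of_le_left (restrictedRootSpace_le_normalizerIn hS hθ hΦΛ hα hv hμ hμΦ hμT)
  · exact le_sup_of_le_right (restrictedRootSpace_le_orthCompl hθ (fun h => hμΦ h.2.1) hv
      (le_iSup₂ (f := fun μ _ => restrictedRootSpace a μ) μ ⟨hμ, hμT⟩))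

end NilpotentConstruction

theorem canonical_extension_of_nilpotent_construction_containment_general
    {g : Type} [LieRing g] [LieAlgebra ℝ g] [FiniteDimensional ℝ g]
    -- Cartan involution and the associated inner product
    (θ : g ≃ₗ⁅ℝ⁆ g)
    -- maximal abelian subspace 𝔞 of 𝔭
    (a : Submodule ℝ g)
    [DecidableEq (Module.Dual ℝ a)]
    (ha_p : ∀ H ∈ a, θ H = -H)
    (ha_ab : ∀ H ∈ a, ∀ H' ∈ a, ⁅H, H'⁆ = (0 : g))
    -- restricted root spaces and restricted roots
    (gsp : Module.Dual ℝ a → Submodule ℝ g)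
    (hgsp : ∀ (lam : Module.Dual ℝ a) (X : g),
      X ∈ gsp lam ↔ ∀ H : a, ⁅(H : g), X⁆ = lam H • X)
    (Sigma : Set (Module.Dual ℝ a))
    (hSigma : Sigma = {lam | lam ≠ 0 ∧ gsp lam ≠ ⊥})
    -- positive and simple roots
    (Splus : Set (Module.Dual ℝ a))
    (hSplus_sub : Splus ⊆ Sigma)
    (Λ : Finset (Module.Dual ℝ a))
    (hΛ_indep : LinearIndependent ℝ
      (fun x : {x // x ∈ Λ} => (x : Module.Dual ℝ a)))
    (c : Module.Dual ℝ a → Module.Dual ℝ a → ℤ)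
    (hc : ∀ lam ∈ Sigma, lam = ∑ α ∈ Λ, (c lam α : ℝ) • α)
    (hc_pos : ∀ lam ∈ Splus, ∀ α ∈ Λ, 0 ≤ c lam α)
    (hc_neg : ∀ lam ∈ Sigma, lam ∉ Splus → ∀ α ∈ Λ, c lam α ≤ 0)
    -- the subspaces 𝔞_Φ and 𝔞^Φ
    (aPhi : Finset (Module.Dual ℝ a) → Submodule ℝ g)
    (haPhi : ∀ (Φ : Finset (Module.Dual ℝ a)) (X : g),
      X ∈ aPhi Φ ↔ ∃ hX : X ∈ a, ∀ α ∈ Φ, α ⟨X, hX⟩ = 0)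
    -- the data: α_j ∈ Φ ⊆ Λ; write Ψ = Φ.erase αj
    (αj : Module.Dual ℝ a) (Φ : Finset (Module.Dual ℝ a))
    (hαjΦ : αj ∈ Φ) (hΦΛ : Φ ⊆ Λ)
    -- 𝔟_Φ and 𝔰_Φ
    (sPhi : Submodule ℝ g)
    -- 𝔫_Φ, 𝔫_{Ψ,Φ}, 𝔫¹_{Ψ,Φ} and 𝔩_{Ψ,Φ}
    (nPhi : Submodule ℝ g)
    (hnPhi : nPhi = ⨆ lam ∈ {μ | μ ∈ Splus ∧
        μ ∉ Submodule.span ℝ (Φ : Set (Module.Dual ℝ a))}, gsp lam)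
    (nPsiPhi : Submodule ℝ g)
    (hnPsiPhi : nPsiPhi = ⨆ lam ∈ {μ | μ ∈ Splus ∧
        μ ∈ Submodule.span ℝ (Φ : Set (Module.Dual ℝ a)) ∧
        μ ∉ Submodule.span ℝ ((Φ.erase αj : Finset (Module.Dual ℝ a)) :
          Set (Module.Dual ℝ a))}, gsp lam)
    (n1 : Submodule ℝ g)
    (hn1 : n1 = ⨆ lam ∈ {μ | μ ∈ Splus ∧
        μ ∈ Submodule.span ℝ (Φ : Set (Module.Dual ℝ a)) ∧ c μ αj = 1}, gsp lam)
    (lPsiPhi : Submodule ℝ g)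
    (hlPsiPhi : lPsiPhi = (sPhi ⊓ gsp 0) ⊔ ⨆ lam ∈ {μ | μ ∈ Sigma ∧
        μ ∈ Submodule.span ℝ ((Φ.erase αj : Finset (Module.Dual ℝ a)) :
          Set (Module.Dual ℝ a))}, gsp lam)
    -- 𝔩_{Λ∖{α_j}} and 𝔫_{Λ∖{α_j}}
    (lLam : Submodule ℝ g)
    (hlLam : lLam = gsp 0 ⊔ ⨆ lam ∈ {μ | μ ∈ Sigma ∧
        μ ∈ Submodule.span ℝ ((Λ.erase αj : Finset (Module.Dual ℝ a)) :
          Set (Module.Dual ℝ a))}, gsp lam)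
    (nLam : Submodule ℝ g)
    (hnLam : nLam = ⨆ lam ∈ {μ | μ ∈ Splus ∧
        μ ∉ Submodule.span ℝ ((Λ.erase αj : Finset (Module.Dual ℝ a)) :
          Set (Module.Dual ℝ a))}, gsp lam)
    -- the subspace 𝔳 of 𝔫¹_{Ψ,Φ}
    (v : Submodule ℝ g) (hv : v ≤ n1) :
    normalizerIn lPsiPhi (orthCompl θ nPsiPhi v) ⊔ orthCompl θ nPsiPhi v
        ⊔ aPhi Φ ⊔ nPhi
      ≤ normalizerIn lLam (orthCompl θ nLam v) ⊔ orthCompl θ nLam v := by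
  obtain rfl : gsp = restrictedRootSpace a :=
    funext fun μ => SetLike.ext fun X => (hgsp μ X).trans mem_restrictedRootSpace.symm
  subst hSigma hnPhi hnPsiPhi hn1 hlPsiPhi hlLam hnLam
  have hS : IsSimpleSystem ℝ (restrictedRoots a) Splus Λ c :=
    ⟨hSplus_sub, hΛ_indep, hc, hc_pos, hc_neg⟩
  refine sup_le (sup_le (sup_le ?_ ?_) ?_) ?_
  · exact (normalizerIn_orthCompl_le hS ha_p hΦΛ hv (fun ν hν => hν.2.1) inf_le_right).trans
      le_sup_left
  · exact (orthCompl_mono_left (biSup_span_erase_le hS hΦΛ)).trans le_sup_right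
  · intro X hX
    obtain ⟨hXa, hXΦ⟩ := (haPhi Φ X).mp hX
    exact mem_sup_left (mem_normalizerIn_orthCompl ha_ab ha_p hv le_sup_left hXa
      fun ν hν => Dual.apply_eq_zero_of_mem_span hXΦ hν.2.1)
  · exact iSup₂_le fun μ hμ =>
      restrictedRootSpace_le_normalizerIn_sup_orthCompl hS ha_p hΦΛ (hΦΛ hαjΦ) hv hμ.1 hμ.2

/-- final containment in the proof of Lemma 5.3. Let `α_j ∈ Φ ⊆ Λ`,
`Ψ = Φ∖{α_j}`, and let `𝔳` be any subspace of `𝔫¹_{Ψ,Φ}`.  Then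
`N_{𝔩_{Ψ,Φ}}(𝔫_{Ψ,Φ} ⊖ 𝔳) + (𝔫_{Ψ,Φ} ⊖ 𝔳) + 𝔞_Φ + 𝔫_Φ
  ⊆ N_{𝔩_{Λ∖{α_j}}}(𝔫_{Λ∖{α_j}} ⊖ 𝔳) + (𝔫_{Λ∖{α_j}} ⊖ 𝔳)`. -/
theorem canonical_extension_of_nilpotent_construction_containment
    {g : Type} [LieRing g] [LieAlgebra ℝ g] [FiniteDimensional ℝ g]
    [LieAlgebra.IsSemisimple ℝ g]
    -- Cartan involution and the associated inner product
    (θ : g ≃ₗ⁅ℝ⁆ g) (hθinv : ∀ X, θ (θ X) = X)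
    (hθpos : ∀ X : g, X ≠ 0 → 0 < -(killingForm ℝ g X (θ X)))
    (ip : g → g → ℝ) (hip : ∀ X Y : g, ip X Y = -(killingForm ℝ g X (θ Y)))
    -- maximal abelian subspace 𝔞 of 𝔭
    (a : Submodule ℝ g)
    [DecidableEq (Module.Dual ℝ a)]
    (ha_p : ∀ H ∈ a, θ H = -H)
    (ha_ab : ∀ H ∈ a, ∀ H' ∈ a, ⁅H, H'⁆ = (0 : g))
    (ha_max : ∀ X : g, θ X = -X → (∀ H ∈ a, ⁅H, X⁆ = 0) → X ∈ a)
    -- restricted root spaces and restricted roots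
    (gsp : Module.Dual ℝ a → Submodule ℝ g)
    (hgsp : ∀ (lam : Module.Dual ℝ a) (X : g),
      X ∈ gsp lam ↔ ∀ H : a, ⁅(H : g), X⁆ = lam H • X)
    (Sigma : Set (Module.Dual ℝ a))
    (hSigma : Sigma = {lam | lam ≠ 0 ∧ gsp lam ≠ ⊥})
    (hdecomp : (⨆ lam ∈ insert (0 : Module.Dual ℝ a) Sigma, gsp lam) = ⊤)
    -- positive and simple roots
    (Splus : Set (Module.Dual ℝ a))
    (hSplus_sub : Splus ⊆ Sigma)
    (hSigma_split : Sigma = Splus ∪ (Neg.neg '' Splus))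
    (hSplus_disj : ∀ lam ∈ Splus, -lam ∉ Splus)
    (Λ : Finset (Module.Dual ℝ a))
    (hΛ_sub : (Λ : Set (Module.Dual ℝ a)) ⊆ Splus)
    (hΛ_indep : LinearIndependent ℝ
      (fun x : {x // x ∈ Λ} => (x : Module.Dual ℝ a)))
    (hΛ_span : Submodule.span ℝ (Λ : Set (Module.Dual ℝ a)) = ⊤)
    (c : Module.Dual ℝ a → Module.Dual ℝ a → ℤ)
    (hc : ∀ lam ∈ Sigma, lam = ∑ α ∈ Λ, (c lam α : ℝ) • α)
    (hc_pos : ∀ lam ∈ Splus, ∀ α ∈ Λ, 0 ≤ c lam α)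
    (hc_neg : ∀ lam ∈ Sigma, lam ∉ Splus → ∀ α ∈ Λ, c lam α ≤ 0)
    -- the subspaces 𝔞_Φ and 𝔞^Φ
    (aPhi : Finset (Module.Dual ℝ a) → Submodule ℝ g)
    (haPhi : ∀ (Φ : Finset (Module.Dual ℝ a)) (X : g),
      X ∈ aPhi Φ ↔ ∃ hX : X ∈ a, ∀ α ∈ Φ, α ⟨X, hX⟩ = 0)
    (aUp : Finset (Module.Dual ℝ a) → Submodule ℝ g)
    (haUp : ∀ (Φ : Finset (Module.Dual ℝ a)) (X : g),
      X ∈ aUp Φ ↔ X ∈ a ∧ ∀ Y ∈ aPhi Φ, ip X Y = 0)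
    -- the spaces 𝔭_λ = {X − θX : X ∈ 𝔤_λ}
    (pl : Module.Dual ℝ a → Submodule ℝ g)
    (hpl : ∀ lam : Module.Dual ℝ a,
      (pl lam : Set g) = {Z : g | ∃ X ∈ gsp lam, Z = X - θ X})
    -- the data: α_j ∈ Φ ⊆ Λ; write Ψ = Φ.erase αj
    (αj : Module.Dual ℝ a) (Φ : Finset (Module.Dual ℝ a))
    (hαjΦ : αj ∈ Φ) (hΦΛ : Φ ⊆ Λ)
    -- 𝔟_Φ and 𝔰_Φ
    (bPhi : Submodule ℝ g)
    (hbPhi : bPhi = aUp Φ ⊔ ⨆ lam ∈ {μ | μ ∈ Splus ∧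
        μ ∈ Submodule.span ℝ (Φ : Set (Module.Dual ℝ a))}, pl lam)
    (sPhi : Submodule ℝ g)
    (hsPhi : sPhi = bracketSpan bPhi bPhi ⊔ bPhi)
    -- 𝔫_Φ, 𝔫_{Ψ,Φ}, 𝔫¹_{Ψ,Φ} and 𝔩_{Ψ,Φ}
    (nPhi : Submodule ℝ g)
    (hnPhi : nPhi = ⨆ lam ∈ {μ | μ ∈ Splus ∧
        μ ∉ Submodule.span ℝ (Φ : Set (Module.Dual ℝ a))}, gsp lam)
    (nPsiPhi : Submodule ℝ g)
    (hnPsiPhi : nPsiPhi = ⨆ lam ∈ {μ | μ ∈ Splus ∧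
        μ ∈ Submodule.span ℝ (Φ : Set (Module.Dual ℝ a)) ∧
        μ ∉ Submodule.span ℝ ((Φ.erase αj : Finset (Module.Dual ℝ a)) :
          Set (Module.Dual ℝ a))}, gsp lam)
    (n1 : Submodule ℝ g)
    (hn1 : n1 = ⨆ lam ∈ {μ | μ ∈ Splus ∧
        μ ∈ Submodule.span ℝ (Φ : Set (Module.Dual ℝ a)) ∧ c μ αj = 1}, gsp lam)
    (lPsiPhi : Submodule ℝ g)
    (hlPsiPhi : lPsiPhi = (sPhi ⊓ gsp 0) ⊔ ⨆ lam ∈ {μ | μ ∈ Sigma ∧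
        μ ∈ Submodule.span ℝ ((Φ.erase αj : Finset (Module.Dual ℝ a)) :
          Set (Module.Dual ℝ a))}, gsp lam)
    -- 𝔩_{Λ∖{α_j}} and 𝔫_{Λ∖{α_j}}
    (lLam : Submodule ℝ g)
    (hlLam : lLam = gsp 0 ⊔ ⨆ lam ∈ {μ | μ ∈ Sigma ∧
        μ ∈ Submodule.span ℝ ((Λ.erase αj : Finset (Module.Dual ℝ a)) :
          Set (Module.Dual ℝ a))}, gsp lam)
    (nLam : Submodule ℝ g)
    (hnLam : nLam = ⨆ lam ∈ {μ | μ ∈ Splus ∧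
        μ ∉ Submodule.span ℝ ((Λ.erase αj : Finset (Module.Dual ℝ a)) :
          Set (Module.Dual ℝ a))}, gsp lam)
    -- the subspace 𝔳 of 𝔫¹_{Ψ,Φ}
    (v : Submodule ℝ g) (hv : v ≤ n1) :
    normalizerIn lPsiPhi (orthCompl θ nPsiPhi v) ⊔ orthCompl θ nPsiPhi v
        ⊔ aPhi Φ ⊔ nPhi
      ≤ normalizerIn lLam (orthCompl θ nLam v) ⊔ orthCompl θ nLam v :=
  canonical_extension_of_nilpotent_construction_containment_general θ a ha_p ha_ab gsp hgsp Sigma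
    hSigma Splus hSplus_sub Λ hΛ_indep c hc hc_pos hc_neg aPhi haPhi αj Φ hαjΦ hΦΛ sPhi nPhi hnPhi
    nPsiPhi hnPsiPhi n1 hn1 lPsiPhi hlPsiPhi lLam hlLam nLam hnLam v hv
end

section
/- Let 𝔤 be a finite-dimensional real semisimple Lie algebra and let 𝔤 = 𝔤₁ ⊕ ⋯ ⊕ 𝔤_s be its decomposition into simple ideals. Every maximal proper Lie subalgebra 𝔩 of 𝔤 (i.e. a coatom in the lattice of Lie subalgebras of 𝔤) has one of the following two forms: (i) 𝔩 = (⊕_{i≠j} 𝔤_i) ⊕ 𝔩_j for some index j and some maximal proper Lie subalgebra 𝔩_j of 𝔤_j; or (ii) 𝔩 = (⊕_{i≠j,k} 𝔤_i) ⊕ 𝔤_{j,k,σ} for two distinct indices j, k and a Lie algebra isomorphism σ : 𝔤_j → 𝔤_k, where 𝔤_{j,k,σ} = {X + σ(X) : X ∈ 𝔤_j}. (This dichotomy, stated in Section 3 of the paper following Dynkin, underlies the case analysis in the proofs of Theorems 1 and 3.) -/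
/-!
Let `π_i` be the projections of `𝔤` onto the simple ideals `𝔤_i`; they are Lie algebra
endomorphisms. If some `π_j 𝔩` is a proper subalgebra of `𝔤_j`, then `𝔩 ≤ π_j⁻¹ (π_j 𝔩) < 𝔤`
forces `𝔩 = π_j⁻¹ (π_j 𝔩)`, which is form (i).

Otherwise every `π_i` maps `𝔩` onto `𝔤_i`, so `𝔩 ∩ 𝔤_i` is an ideal of `𝔤`, hence `0` or `𝔤_i`.
Pick `j ≠ k` with `𝔩 ∩ 𝔤_j = 𝔩 ∩ 𝔤_k = 0`. As `𝔩 + 𝔤_j = 𝔤`, the subspace `𝔩 ∩ ker π_j` is an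
ideal of `𝔤`, so for `w` in it `π_k w` is central, hence zero. Thus `σ (π_j z) = π_k z` (`z ∈ 𝔩`)
is a well-defined isomorphism `𝔤_j → 𝔤_k`, and `𝔩` lies in, hence equals, the proper
subalgebra `{x | π_k x = σ (π_j x)}`, which is form (ii).
-/

theorem LinearMap.exists_comp_eq_of_ker_le {K V W U : Type*} [DivisionRing K]
    [AddCommGroup V] [Module K V] [AddCommGroup W] [Module K W] [AddCommGroup U] [Module K U]
    (f : V →ₗ[K] W) (h : V →ₗ[K] U) (hker : ker f ≤ ker h) :
    ∃ σ : W →ₗ[K] U, σ ∘ₗ f = h := by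
  obtain ⟨σ, hσ⟩ :=
    ((ker f).liftQ h hker ∘ₗ f.quotKerEquivRange.symm.toLinearMap).exists_extend
  refine ⟨σ, LinearMap.ext fun v => ?_⟩
  have hv : σ (f v) = ((ker f).liftQ h hker ∘ₗ f.quotKerEquivRange.symm.toLinearMap)
      ⟨f v, mem_range_self f v⟩ := by rw [← hσ]; rfl
  have hfv : (⟨f v, mem_range_self f v⟩ : range f)
      = f.quotKerEquivRange (Submodule.Quotient.mk v) :=
    Subtype.ext (f.quotKerEquivRange_apply_mk v).symm
  rw [LinearMap.comp_apply, hv, LinearMap.comp_apply, LinearEquiv.coe_coe, hfv,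
    LinearEquiv.symm_apply_apply]
  rfl

namespace LieSubalgebra

variable {R L : Type*} [CommRing R] [LieRing L] [LieAlgebra R L]

def supLieIdeal (K : LieSubalgebra R L) (J : LieIdeal R L) : LieSubalgebra R L where
  toSubmodule := K.toSubmodule ⊔ J
  lie_mem' {x y} hx hy := by
    obtain ⟨a, ha, b, hb, rfl⟩ := Submodule.mem_sup.mp hx
    obtain ⟨a', ha', b', hb', rfl⟩ := Submodule.mem_sup.mp hy
    rw [add_lie, lie_add, add_assoc]
    exact Submodule.add_mem_sup (K.lie_mem ha ha')
      (add_mem (lie_mem_right R L J _ _ hb') (lie_mem_left R L J _ _ hb))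

lemma toSubmodule_sup_eq_top_of_isCoatom {K : LieSubalgebra R L} (hK : IsCoatom K)
    {J : LieIdeal R L} (hJ : ¬ (J : Submodule R L) ≤ K.toSubmodule) :
    K.toSubmodule ⊔ J = ⊤ := by
  have hle : K ≤ K.supLieIdeal J := fun _ hx => Submodule.mem_sup_left hx
  rcases hK.le_iff.mp hle with h | h
  · exact (toSubmodule_eq_top _).mpr h
  · exact absurd (fun x hx => h ▸ Submodule.mem_sup_right hx) hJ

end LieSubalgebra

namespace DirectSum.IsInternal

section Module

variable {R M ι : Type*} [Ring R] [AddCommGroup M] [Module R M] [DecidableEq ι]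
  {A : ι → Submodule R M}

lemma exists_not_le_of_ne_top (hA : IsInternal A) {p : Submodule R M} (hp : p ≠ ⊤) :
    ∃ i, ¬ A i ≤ p := by
  by_contra! h
  exact hp (top_unique (hA.submodule_iSup_eq_top ▸ iSup_le h))

variable (hA : IsInternal A)

noncomputable def proj (i : ι) : M →ₗ[R] M :=
  (A i).subtype ∘ₗ component R ι (fun i => A i) i ∘ₗ
    (LinearEquiv.ofBijective (coeLinearMap A) hA).symm.toLinearMap

lemma proj_mem (i : ι) (x : M) : hA.proj i x ∈ A i :=
  ((LinearEquiv.ofBijective (coeLinearMap A) hA).symm x i).2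

lemma proj_of_mem {i : ι} {x : M} (hx : x ∈ A i) : hA.proj i x = x := by
  simp [proj, ← apply_eq_component, hA.ofBijective_coeLinearMap_of_mem hx]

lemma proj_of_mem_of_ne {i j : ι} (hij : i ≠ j) {x : M} (hx : x ∈ A i) : hA.proj j x = 0 := by
  simp [proj, ← apply_eq_component, hA.ofBijective_coeLinearMap_of_mem_ne hij hx]

lemma range_proj (i : ι) : LinearMap.range (hA.proj i) = A i :=
  le_antisymm (LinearMap.range_le_iff_comap.mpr (eq_top_iff.mpr fun x _ => hA.proj_mem i x))
    fun x hx => ⟨x, hA.proj_of_mem hx⟩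

variable [Fintype ι]

lemma sum_proj (x : M) : ∑ i, hA.proj i x = x := by
  set d := (LinearEquiv.ofBijective (coeLinearMap A) hA).symm x
  have hd : coeLinearMap A d = x :=
    (LinearEquiv.ofBijective (coeLinearMap A) hA).apply_symm_apply x
  rw [← DirectSum.sum_univ_of d, map_sum] at hd
  simpa [proj, ← apply_eq_component] using hd

lemma proj_comm {f : M →ₗ[R] M} (hf : ∀ i, ∀ x ∈ A i, f x ∈ A i) (i : ι) (x : M) :
    hA.proj i (f x) = f (hA.proj i x) := by
  conv_lhs => rw [← hA.sum_proj x]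
  rw [map_sum, map_sum, Finset.sum_eq_single i (fun j _ hji => hA.proj_of_mem_of_ne hji
    (hf j _ (hA.proj_mem j x))) (by simp), hA.proj_of_mem (hf i _ (hA.proj_mem i x))]

lemma mem_biSup_iff {S : Set ι} {x : M} :
    x ∈ ⨆ i ∈ S, A i ↔ ∀ i ∉ S, hA.proj i x = 0 := by
  refine ⟨fun hx i hi => ?_, fun h => ?_⟩
  · refine (iSup₂_le fun m hm y hy => ?_ : ⨆ i ∈ S, A i ≤ LinearMap.ker (hA.proj i)) hx
    exact hA.proj_of_mem_of_ne (ne_of_mem_of_not_mem hm hi) hy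
  · rw [← hA.sum_proj x]
    refine Submodule.sum_mem _ fun i _ => ?_
    by_cases hi : i ∈ S
    · exact Submodule.mem_iSup_of_mem i (Submodule.mem_iSup_of_mem hi (hA.proj_mem i x))
    · rw [h i hi]; exact zero_mem _

lemma comap_proj {i : ι} {m : Submodule R M} (hm : m ≤ A i) :
    m.comap (hA.proj i) = (⨆ j ∈ {j | j ≠ i}, A j) ⊔ m := by
  ext x
  refine ⟨fun (hx : hA.proj i x ∈ m) => ?_, fun hx => ?_⟩
  · have hrest : x - hA.proj i x ∈ ⨆ j ∈ {j | j ≠ i}, A j :=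
      hA.mem_biSup_iff.mpr fun j hj => by
        obtain rfl : j = i := not_not.mp hj
        rw [map_sub, hA.proj_of_mem (hA.proj_mem j x), sub_self]
    simpa using Submodule.add_mem_sup hrest hx
  · obtain ⟨a, ha, b, hb, rfl⟩ := Submodule.mem_sup.mp hx
    rw [Submodule.mem_comap, map_add, hA.mem_biSup_iff.mp ha i (by simp),
      hA.proj_of_mem (hm hb), zero_add]
    exact hb

lemma ker_proj_sub_comp_proj {j k : ι} (hjk : j ≠ k) {σ : M →ₗ[R] M}
    (hσ : ∀ x ∈ A j, σ x ∈ A k) :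
    LinearMap.ker (hA.proj k - σ ∘ₗ hA.proj j)
      = (⨆ i ∈ {i | i ≠ j ∧ i ≠ k}, A i) ⊔ (A j).map (LinearMap.id + σ) := by
  ext x
  simp only [LinearMap.mem_ker, LinearMap.sub_apply, LinearMap.comp_apply, sub_eq_zero]
  refine ⟨fun hx => ?_, fun hx => ?_⟩
  · have hrest : x - hA.proj j x - hA.proj k x ∈ ⨆ i ∈ {i | i ≠ j ∧ i ≠ k}, A i :=
      hA.mem_biSup_iff.mpr fun i hi => by
        obtain rfl | rfl : i = j ∨ i = k := or_iff_not_imp_left.mpr (by simpa using hi)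
        · simp [hA.proj_of_mem (hA.proj_mem _ x),
            hA.proj_of_mem_of_ne hjk.symm (hA.proj_mem k x)]
        · simp [hA.proj_of_mem (hA.proj_mem _ x), hA.proj_of_mem_of_ne hjk (hA.proj_mem j x)]
    have hgraph : hA.proj j x + σ (hA.proj j x) ∈ (A j).map (LinearMap.id + σ) :=
      ⟨_, hA.proj_mem j x, rfl⟩
    convert Submodule.add_mem_sup hrest hgraph using 1
    rw [← hx]
    abel
  · obtain ⟨a, ha, _, ⟨y, hy, rfl⟩, rfl⟩ := Submodule.mem_sup.mp hx
    simp [hA.mem_biSup_iff.mp ha j (by simp), hA.mem_biSup_iff.mp ha k (by simp),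
      hA.proj_of_mem hy, hA.proj_of_mem (hσ y hy), hA.proj_of_mem_of_ne hjk hy,
      hA.proj_of_mem_of_ne hjk.symm (hσ y hy)]

end Module

section Lie

variable {R L ι : Type*} [CommRing R] [LieRing L] [LieAlgebra R L] [DecidableEq ι] [Fintype ι]
  {I : ι → LieIdeal R L} (hI : IsInternal fun i => (I i : Submodule R L))

lemma proj_lie_right (i : ι) (x y : L) : hI.proj i ⁅x, y⁆ = ⁅x, hI.proj i y⁆ :=
  hI.proj_comm (f := LieAlgebra.ad R L x) (fun j _ hy => (I j).lie_mem hy) i y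

lemma lie_proj_of_mem {i : ι} (x : L) {y : L} (hy : y ∈ I i) : ⁅hI.proj i x, y⁆ = ⁅x, y⁆ := by
  rw [← lie_skew, ← hI.proj_lie_right, ← map_neg, lie_skew,
    hI.proj_of_mem (lie_mem_right R L (I i) x y hy)]

lemma proj_lie (i : ι) (x y : L) : hI.proj i ⁅x, y⁆ = ⁅hI.proj i x, hI.proj i y⁆ := by
  rw [hI.proj_lie_right, hI.lie_proj_of_mem x (hI.proj_mem i y)]

noncomputable def lieProj (i : ι) : L →ₗ⁅R⁆ L :=
  { hI.proj i with map_lie' := hI.proj_lie i _ _ }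

variable {l : LieSubalgebra R L}

lemma map_lieProj_comap {i : ι} {m : LieSubalgebra R L} (hm : m.toSubmodule ≤ I i) :
    (m.comap (hI.lieProj i)).map (hI.lieProj i) = m := by
  ext x
  refine ⟨fun ⟨y, hy, hyx⟩ => hyx ▸ hy, fun hx => ⟨x, ?_, ?_⟩⟩
  · show hI.proj i x ∈ m
    rwa [hI.proj_of_mem (hm hx)]
  · exact hI.proj_of_mem (hm hx)

lemma toSubmodule_map_lieProj_top (i : ι) :
    ((⊤ : LieSubalgebra R L).map (hI.lieProj i)).toSubmodule = I i :=
  (Submodule.map_top _).trans (hI.range_proj i)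

lemma toSubmodule_map_lieProj_le (j : ι) : (l.map (hI.lieProj j)).toSubmodule ≤ I j :=
  LinearMap.map_le_range.trans (hI.range_proj j).le

lemma eq_comap_map_lieProj {j : ι} (hl : IsCoatom l)
    (hj : (l.map (hI.lieProj j)).toSubmodule ≠ I j) :
    l = (l.map (hI.lieProj j)).comap (hI.lieProj j) := by
  refine ((hl.le_iff.mp (LieSubalgebra.map_le_iff_le_comap.mp le_rfl)).resolve_left ?_).symm
  intro htop
  apply hj
  rw [← hI.map_lieProj_comap (hI.toSubmodule_map_lieProj_le j), htop,
    hI.toSubmodule_map_lieProj_top]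

lemma map_lieProj_eq_or_eq {j : ι} (hl : IsCoatom l) {m : LieSubalgebra R L}
    (hm : m.toSubmodule ≤ I j) (hlm : l.map (hI.lieProj j) ≤ m) :
    m = l.map (hI.lieProj j) ∨ m.toSubmodule = I j := by
  rcases hl.le_iff.mp (LieSubalgebra.map_le_iff_le_comap.mp hlm) with h | h
  · rw [← hI.map_lieProj_comap hm, h, hI.toSubmodule_map_lieProj_top]
    exact Or.inr rfl
  · rw [← h, hI.map_lieProj_comap hm]
    exact Or.inl rfl

lemma exists_mem_proj_eq {j : ι} (hsurj : (l.map (hI.lieProj j)).toSubmodule = I j) {x : L}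
    (hx : x ∈ I j) : ∃ z ∈ l, hI.proj j z = x :=
  (hsurj ▸ hx : x ∈ (l.map (hI.lieProj j)).toSubmodule)

lemma le_or_inf_eq_bot {i : ι} (hsurj : (l.map (hI.lieProj i)).toSubmodule = I i)
    (hatom : IsAtom (I i)) :
    (I i : Submodule R L) ≤ l.toSubmodule ∨ l.toSubmodule ⊓ I i = ⊥ := by
  let J : LieIdeal R L :=
    { toSubmodule := l.toSubmodule ⊓ I i
      lie_mem := fun {x y} hy => by
        obtain ⟨z, hz, hzx⟩ := hI.exists_mem_proj_eq hsurj (hI.proj_mem i x)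
        have hxz : ⁅x, y⁆ = ⁅z, y⁆ := by
          rw [← hI.lie_proj_of_mem x hy.2, ← hI.lie_proj_of_mem z hy.2]
          exact congrArg (⁅·, y⁆) hzx.symm
        exact ⟨hxz ▸ l.lie_mem hz hy.1, lie_mem_right R L (I i) x y hy.2⟩ }
  rcases hatom.le_iff.mp (show J ≤ I i from fun _ hx => hx.2) with h | h
  · exact Or.inr (congrArg LieSubmodule.toSubmodule h)
  · exact Or.inl fun x hx => (show x ∈ J from h ▸ hx).1

lemma exists_ne_not_le {j : ι} (hsurj : (l.map (hI.lieProj j)).toSubmodule = I j)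
    (hj : l.toSubmodule ⊓ I j = ⊥) (hne : I j ≠ ⊥) :
    ∃ k ≠ j, ¬ (I k : Submodule R L) ≤ l.toSubmodule := by
  by_contra! h
  obtain ⟨y, hy, hy0⟩ := Submodule.exists_mem_ne_zero_of_ne_bot
    ((LieSubmodule.toSubmodule_eq_bot _).not.mpr hne)
  obtain ⟨z, hz, hzy⟩ := hI.exists_mem_proj_eq hsurj hy
  have hker : z - y ∈ ⨆ k ∈ {k | k ≠ j}, (I k : Submodule R L) :=
    hI.mem_biSup_iff.mpr fun k hk => by
      obtain rfl : k = j := not_not.mp hk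
      rw [map_sub, ← hzy, hI.proj_of_mem (hI.proj_mem k z), sub_self]
  have hyl : y ∈ l := by
    simpa using l.sub_mem hz ((iSup₂_le fun k hk => h k hk) hker)
  exact hy0 ((Submodule.mem_bot R).mp (hj ▸ ⟨hyl, hy⟩))

lemma lie_mem_of_proj_eq_zero {j : ι} (hl : IsCoatom l)
    (hj : ¬ (I j : Submodule R L) ≤ l.toSubmodule) {w : L} (hw : w ∈ l)
    (hwj : hI.proj j w = 0) (x : L) : ⁅x, w⁆ ∈ l := by
  obtain ⟨a, ha, b, hb, rfl⟩ := Submodule.mem_sup.mp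
    ((LieSubalgebra.toSubmodule_sup_eq_top_of_isCoatom hl hj).symm ▸ Submodule.mem_top :
      x ∈ l.toSubmodule ⊔ I j)
  have hbw : ⁅b, w⁆ = 0 := by
    rw [← lie_skew, ← hI.lie_proj_of_mem w hb, hwj, zero_lie, neg_zero]
  rw [add_lie, hbw, add_zero]
  exact l.lie_mem ha hw

lemma proj_eq_zero_of_proj_eq_zero [LieModule.IsFaithful R L L] {j k : ι} (hl : IsCoatom l)
    (hj : ¬ (I j : Submodule R L) ≤ l.toSubmodule) (hk : l.toSubmodule ⊓ I k = ⊥)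
    {w : L} (hw : w ∈ l) (hwj : hI.proj j w = 0) : hI.proj k w = 0 := by
  have hcentral : ∀ x, ⁅x, hI.proj k w⁆ = 0 := fun x => by
    have hmem : ⁅hI.proj k x, w⁆ ∈ l.toSubmodule ⊓ I k :=
      ⟨hI.lie_mem_of_proj_eq_zero hl hj hw hwj _, lie_mem_left R L (I k) _ _ (hI.proj_mem k x)⟩
    rw [hk, Submodule.mem_bot] at hmem
    rw [← hI.lie_proj_of_mem x (hI.proj_mem k w), ← hI.proj_lie_right, hmem, map_zero]
  have hcenter : hI.proj k w ∈ LieAlgebra.center R L :=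
    (LieModule.mem_maxTrivSubmodule R L L _).mpr hcentral
  rwa [LieAlgebra.center_eq_bot, LieSubmodule.mem_bot] at hcenter

/-- When `σ` maps `𝔤_j` into `𝔤_k`, this is `(⨁_{i ≠ j, k} 𝔤_i) ⊕ 𝔤_{j,k,σ}`
(`ker_proj_sub_comp_proj`). -/
noncomputable def graphSubalgebra (j k : ι) (σ : L →ₗ[R] L)
    (hσ : ∀ x ∈ I j, ∀ y ∈ I j, σ ⁅x, y⁆ = ⁅σ x, σ y⁆) : LieSubalgebra R L where
  toSubmodule := LinearMap.ker (hI.proj k - σ ∘ₗ hI.proj j)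
  lie_mem' {x y} hx hy := by
    have hx : hI.proj k x = σ (hI.proj j x) := sub_eq_zero.mp hx
    have hy : hI.proj k y = σ (hI.proj j y) := sub_eq_zero.mp hy
    show hI.proj k ⁅x, y⁆ - σ (hI.proj j ⁅x, y⁆) = 0
    rw [sub_eq_zero, hI.proj_lie, hI.proj_lie, hx, hy,
      hσ _ (hI.proj_mem j x) _ (hI.proj_mem j y)]

variable {j k : ι} {σ : L →ₗ[R] L}

lemma map_mem_of_comp_proj_eq (hsurj : (l.map (hI.lieProj j)).toSubmodule = I j)
    (hσ : ∀ z ∈ l, σ (hI.proj j z) = hI.proj k z) {x : L} (hx : x ∈ I j) : σ x ∈ I k := by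
  obtain ⟨z, hz, rfl⟩ := hI.exists_mem_proj_eq hsurj hx
  exact hσ z hz ▸ hI.proj_mem k z

lemma map_lie_of_comp_proj_eq (hsurj : (l.map (hI.lieProj j)).toSubmodule = I j)
    (hσ : ∀ z ∈ l, σ (hI.proj j z) = hI.proj k z) {x y : L} (hx : x ∈ I j) (hy : y ∈ I j) :
    σ ⁅x, y⁆ = ⁅σ x, σ y⁆ := by
  obtain ⟨z, hz, rfl⟩ := hI.exists_mem_proj_eq hsurj hx
  obtain ⟨w, hw, rfl⟩ := hI.exists_mem_proj_eq hsurj hy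
  rw [← hI.proj_lie, hσ _ (l.lie_mem hz hw), hσ z hz, hσ w hw, hI.proj_lie]

lemma eq_zero_of_comp_proj_eq (hsurj : (l.map (hI.lieProj j)).toSubmodule = I j)
    (hσ : ∀ z ∈ l, σ (hI.proj j z) = hI.proj k z)
    (hkj : ∀ z ∈ l, hI.proj k z = 0 → hI.proj j z = 0) {x : L} (hx : x ∈ I j) (hσx : σ x = 0) :
    x = 0 := by
  obtain ⟨z, hz, rfl⟩ := hI.exists_mem_proj_eq hsurj hx
  exact hkj z hz (hσ z hz ▸ hσx)

lemma exists_eq_of_comp_proj_eq (hsurj : (l.map (hI.lieProj k)).toSubmodule = I k)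
    (hσ : ∀ z ∈ l, σ (hI.proj j z) = hI.proj k z) {y : L} (hy : y ∈ I k) :
    ∃ x ∈ I j, σ x = y := by
  obtain ⟨z, hz, rfl⟩ := hI.exists_mem_proj_eq hsurj hy
  exact ⟨hI.proj j z, hI.proj_mem j z, hσ z hz⟩

lemma eq_graphSubalgebra (hl : IsCoatom l) (hjk : j ≠ k) (hk : I k ≠ ⊥)
    (hσ : ∀ z ∈ l, σ (hI.proj j z) = hI.proj k z)
    (hσlie : ∀ x ∈ I j, ∀ y ∈ I j, σ ⁅x, y⁆ = ⁅σ x, σ y⁆) :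
    l = hI.graphSubalgebra j k σ hσlie := by
  have hle : l ≤ hI.graphSubalgebra j k σ hσlie := fun z hz =>
    LinearMap.mem_ker.mpr (sub_eq_zero.mpr (hσ z hz).symm)
  refine ((hl.le_iff.mp hle).resolve_left fun htop => ?_).symm
  obtain ⟨y, hy, hy0⟩ := Submodule.exists_mem_ne_zero_of_ne_bot
    ((LieSubmodule.toSubmodule_eq_bot _).not.mpr hk)
  have hyσ : hI.proj k y - σ (hI.proj j y) = 0 :=
    (htop ▸ LieSubalgebra.mem_top y : y ∈ hI.graphSubalgebra j k σ hσlie)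
  rw [hI.proj_of_mem hy, hI.proj_of_mem_of_ne hjk.symm hy, map_zero, sub_zero] at hyσ
  exact hy0 hyσ

end Lie

lemma exists_comp_proj_eq {K L ι : Type*} [Field K] [LieRing L] [LieAlgebra K L]
    [DecidableEq ι] [Fintype ι] {I : ι → LieIdeal K L}
    (hI : IsInternal fun i => (I i : Submodule K L))
    {l : LieSubalgebra K L} {j k : ι} (hjk : ∀ z ∈ l, hI.proj j z = 0 → hI.proj k z = 0) :
    ∃ σ : L →ₗ[K] L, ∀ z ∈ l, σ (hI.proj j z) = hI.proj k z := by
  obtain ⟨σ, hσ⟩ := LinearMap.exists_comp_eq_of_ker_le (hI.proj j ∘ₗ l.toSubmodule.subtype)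
    (hI.proj k ∘ₗ l.toSubmodule.subtype) fun z hz => hjk z z.2 hz
  exact ⟨σ, fun z hz => LinearMap.congr_fun hσ ⟨z, hz⟩⟩

end DirectSum.IsInternal

theorem maximal_subalgebra_of_semisimple_dichotomy_general
    {g : Type} [LieRing g] [LieAlgebra ℝ g]
    [LieAlgebra.IsSemisimple ℝ g]
    {ι : Type} [Fintype ι] [DecidableEq ι]
    (I : ι → LieIdeal ℝ g)
    (hI_atom : ∀ i, IsAtom (I i))
    (hI_internal : DirectSum.IsInternal fun i => (I i : Submodule ℝ g))
    (l : LieSubalgebra ℝ g)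
    (hl : IsCoatom l) :
    (∃ j : ι, ∃ lj : LieSubalgebra ℝ g,
      (lj : Set g) ⊆ (I j : Set g)
      ∧ lj.toSubmodule ≠ (I j : Submodule ℝ g)
      ∧ (∀ m : LieSubalgebra ℝ g, (m : Set g) ⊆ (I j : Set g) → lj ≤ m →
          m = lj ∨ m.toSubmodule = (I j : Submodule ℝ g))
      ∧ l.toSubmodule
          = (⨆ i ∈ {i : ι | i ≠ j}, (I i : Submodule ℝ g)) ⊔ lj.toSubmodule)
    ∨ (∃ j k : ι, j ≠ k ∧ ∃ σ : g →ₗ[ℝ] g,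
      (∀ x ∈ I j, σ x ∈ I k)
      ∧ (∀ x ∈ I j, ∀ y ∈ I j, σ ⁅x, y⁆ = ⁅σ x, σ y⁆)
      ∧ (∀ x ∈ I j, σ x = 0 → x = 0)
      ∧ (∀ y ∈ I k, ∃ x ∈ I j, σ x = y)
      ∧ l.toSubmodule
          = (⨆ i ∈ {i : ι | i ≠ j ∧ i ≠ k}, (I i : Submodule ℝ g))
            ⊔ Submodule.map (LinearMap.id + σ) (I j : Submodule ℝ g)) := by
  set hI := hI_internal
  by_cases hproper : ∃ j, (l.map (hI.lieProj j)).toSubmodule ≠ I j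
  · obtain ⟨j, hj⟩ := hproper
    refine Or.inl ⟨j, l.map (hI.lieProj j), hI.toSubmodule_map_lieProj_le j, hj,
      fun m hm => hI.map_lieProj_eq_or_eq hl hm, ?_⟩
    conv_lhs => rw [hI.eq_comap_map_lieProj hl hj]
    exact hI.comap_proj (hI.toSubmodule_map_lieProj_le j)
  push Not at hproper
  obtain ⟨j, hj⟩ :=
    hI.exists_not_le_of_ne_top ((LieSubalgebra.toSubmodule_eq_top l).not.mpr hl.1)
  have hj' := (hI.le_or_inf_eq_bot (hproper j) (hI_atom j)).resolve_left hj
  obtain ⟨k, hkj, hk⟩ := hI.exists_ne_not_le (hproper j) hj' (hI_atom j).1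
  have hk' := (hI.le_or_inf_eq_bot (hproper k) (hI_atom k)).resolve_left hk
  obtain ⟨σ, hσ⟩ :=
    hI.exists_comp_proj_eq fun z hz => hI.proj_eq_zero_of_proj_eq_zero hl hj hk' hz
  have hσlie : ∀ x ∈ I j, ∀ y ∈ I j, σ ⁅x, y⁆ = ⁅σ x, σ y⁆ := fun x hx y hy =>
    hI.map_lie_of_comp_proj_eq (hproper j) hσ hx hy
  have hσmem : ∀ x ∈ I j, σ x ∈ I k := fun x hx => hI.map_mem_of_comp_proj_eq (hproper j) hσ hx
  refine Or.inr ⟨j, k, hkj.symm, σ, hσmem, hσlie,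
    fun x hx => hI.eq_zero_of_comp_proj_eq (hproper j) hσ
      (fun z hz => hI.proj_eq_zero_of_proj_eq_zero hl hk hj' hz) hx,
    fun y hy => hI.exists_eq_of_comp_proj_eq (hproper k) hσ hy, ?_⟩
  rw [← hI.ker_proj_sub_comp_proj hkj.symm hσmem,
    hI.eq_graphSubalgebra hl hkj.symm (hI_atom k).1 hσ hσlie]
  rfl

/-- Dynkin's dichotomy for maximal subalgebras of a semisimple Lie
algebra. Let `𝔤` be a finite-dimensional real semisimple Lie algebra, and let
`𝔤 = 𝔤₁ ⊕ ⋯ ⊕ 𝔤_s` be its decomposition into simple ideals (formalized by a finite family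
of atoms in the lattice of ideals whose underlying submodules form an internal direct
sum).  Every maximal proper Lie subalgebra `𝔩` of `𝔤` (a coatom in the lattice of Lie
subalgebras) has one of the following two forms: (i) `𝔩 = (⊕_{i≠j} 𝔤_i) ⊕ 𝔩_j` for some
index `j` and some maximal proper Lie subalgebra `𝔩_j` of `𝔤_j`; or (ii)
`𝔩 = (⊕_{i≠j,k} 𝔤_i) ⊕ 𝔤_{j,k,σ}` for two distinct indices `j, k` and a Lie algebra
isomorphism `σ : 𝔤_j → 𝔤_k`, where `𝔤_{j,k,σ} = {X + σ(X) : X ∈ 𝔤_j}`. -/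
theorem maximal_subalgebra_of_semisimple_dichotomy
    {g : Type} [LieRing g] [LieAlgebra ℝ g] [FiniteDimensional ℝ g]
    [LieAlgebra.IsSemisimple ℝ g]
    {ι : Type} [Fintype ι] [DecidableEq ι]
    (I : ι → LieIdeal ℝ g)
    (hI_atom : ∀ i, IsAtom (I i))
    (hI_internal : DirectSum.IsInternal fun i => (I i : Submodule ℝ g))
    (l : LieSubalgebra ℝ g)
    (hl : IsCoatom l) :
    (∃ j : ι, ∃ lj : LieSubalgebra ℝ g,
      (lj : Set g) ⊆ (I j : Set g)
      ∧ lj.toSubmodule ≠ (I j : Submodule ℝ g)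
      ∧ (∀ m : LieSubalgebra ℝ g, (m : Set g) ⊆ (I j : Set g) → lj ≤ m →
          m = lj ∨ m.toSubmodule = (I j : Submodule ℝ g))
      ∧ l.toSubmodule
          = (⨆ i ∈ {i : ι | i ≠ j}, (I i : Submodule ℝ g)) ⊔ lj.toSubmodule)
    ∨ (∃ j k : ι, j ≠ k ∧ ∃ σ : g →ₗ[ℝ] g,
      (∀ x ∈ I j, σ x ∈ I k)
      ∧ (∀ x ∈ I j, ∀ y ∈ I j, σ ⁅x, y⁆ = ⁅σ x, σ y⁆)
      ∧ (∀ x ∈ I j, σ x = 0 → x = 0)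
      ∧ (∀ y ∈ I k, ∃ x ∈ I j, σ x = y)
      ∧ l.toSubmodule
          = (⨆ i ∈ {i : ι | i ≠ j ∧ i ≠ k}, (I i : Submodule ℝ g))
            ⊔ Submodule.map (LinearMap.id + σ) (I j : Submodule ℝ g)) :=
  maximal_subalgebra_of_semisimple_dichotomy_general I hI_atom hI_internal l hl
end
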